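/- arXiv:2508.14606 — 12 statements merged into one kernel-verified Lean document; each statement's English description precedes it below -/
import Mathlib

section
/- Let f be an n-ary polymorphism of (LO₂, LO₃) and let X ⊆ [n] be a boolean set of f. Then X is static for f if, and only if, there exist sets Y, Z ⊆ [n] such that (X, Y, Z) is a boolean partition of [n] for f. -/
open Finset

/-- A triple of naturals has a unique maximum entry. -/
def HasUniqueMax (a b c : ℕ) : Prop :=
  (b < a ∧ c < a) ∨ (a < b ∧ c < b) ∨ (a < c ∧ b < c)

/-- `f` is an `n`-ary polymorphism of (LO₂, LO₃): it maps subsets of `[n]` to `{0,1,2}`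
and sends every partition of `[n]` into three (possibly empty) parts to a triple with a
unique maximum. -/
def IsLOPoly (n : ℕ) (f : Finset (Fin n) → ℕ) : Prop :=
  (∀ X, f X ≤ 2) ∧
  ∀ X Y Z : Finset (Fin n), Disjoint X Y → Disjoint X Z → Disjoint Y Z →
    X ∪ Y ∪ Z = Finset.univ → HasUniqueMax (f X) (f Y) (f Z)

/-- The function obtained from `f` by changing the value of `X` to `i`. -/
def LORecolour {n : ℕ} (f : Finset (Fin n) → ℕ) (X : Finset (Fin n)) (i : ℕ) :
    Finset (Fin n) → ℕ :=
  fun Y => if Y = X then i else f Y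

/-- `X` is recolourable to `i` for `f`. -/
def LORecolourableTo {n : ℕ} (f : Finset (Fin n) → ℕ) (X : Finset (Fin n)) (i : ℕ) : Prop :=
  i ≠ f X ∧ IsLOPoly n (LORecolour f X i)

/-- A boolean set is static if it is not recolourable to the opposite boolean value. -/
def LOStatic {n : ℕ} (f : Finset (Fin n) → ℕ) (X : Finset (Fin n)) : Prop :=
  (f X = 0 ∧ ¬ LORecolourableTo f X 1) ∨ (f X = 1 ∧ ¬ LORecolourableTo f X 0)

/-- `(X, Y, Z)` is a boolean partition of `[n]` for `f`. -/
def LOBoolPartition {n : ℕ} (f : Finset (Fin n) → ℕ) (X Y Z : Finset (Fin n)) : Prop :=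
  Disjoint X Y ∧ Disjoint X Z ∧ Disjoint Y Z ∧ X ∪ Y ∪ Z = Finset.univ ∧
    ({f X, f Y, f Z} : Set ℕ) = {0, 1}

/-- Every superset of a 2-set is a 2-set. -/
def LOUpwardsClosed {n : ℕ} (f : Finset (Fin n) → ℕ) : Prop :=
  ∀ X Y : Finset (Fin n), f X = 2 → X ⊆ Y → f Y = 2

/-- `f` is saturated: upwards closed and the complement of every boolean set is a 2-set. -/
def LOSaturated {n : ℕ} (f : Finset (Fin n) → ℕ) : Prop :=
  LOUpwardsClosed f ∧ ∀ X : Finset (Fin n), f X ≤ 1 → f Xᶜ = 2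

/-- One step of saturation: `g` is a polymorphism obtained from `f` by recolouring a
single boolean set of `f` to 2. -/
def LORecolourStep {n : ℕ} (f g : Finset (Fin n) → ℕ) : Prop :=
  IsLOPoly n g ∧ ∃ X, f X ≤ 1 ∧ g = LORecolour f X 2

/-- `g` is a saturation of `f`. -/
def IsLOSaturation {n : ℕ} (f g : Finset (Fin n) → ℕ) : Prop :=
  IsLOPoly n g ∧ LOSaturated g ∧ Relation.ReflTransGen LORecolourStep f g

/-- `f` has no small 2-set (a 2-set with at most 3 elements). -/
def LONoSmallTwoSet {n : ℕ} (f : Finset (Fin n) → ℕ) : Prop :=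
  ∀ X, f X = 2 → 4 ≤ X.card

/-- `g` is a pure saturation of `f`: a saturation with no small 2-set. -/
def IsLOPureSaturation {n : ℕ} (f g : Finset (Fin n) → ℕ) : Prop :=
  IsLOSaturation f g ∧ LONoSmallTwoSet g

/-- `M` is a minimal (under inclusion) 2-set of `f`. -/
def LOMinTwoSet {n : ℕ} (f : Finset (Fin n) → ℕ) (M : Finset (Fin n)) : Prop :=
  f M = 2 ∧ ∀ Y, Y ⊂ M → f Y ≠ 2

/-- `T_f`: the union of the minimal 2-sets of `f`. -/
def LOTSet {n : ℕ} (f : Finset (Fin n) → ℕ) : Set (Fin n) :=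
  {a | ∃ M, LOMinTwoSet f M ∧ a ∈ M}

/-- `f` is a recoloured projection with dictating variable `t`: every static boolean set
`S` satisfies `f S = 1` iff `t ∈ S` (and `f S = 0` otherwise). -/
def LORecolProj {n : ℕ} (f : Finset (Fin n) → ℕ) (t : Fin n) : Prop :=
  ∀ S, f S ≤ 1 → LOStatic f S → f S = if t ∈ S then 1 else 0

/-- The `π`-minor of `f`: `f^π (X) = f(π⁻¹(X))`. -/
def LOMinor {n m : ℕ} (f : Finset (Fin n) → ℕ) (π : Fin n → Fin m) :
    Finset (Fin m) → ℕ :=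
  fun X => f (Finset.univ.filter (fun a => π a ∈ X))

lemma lo_key (a b c a' b' c' : ℕ) (ha2 : a ≤ 2) (hb2 : b ≤ 2) (hc2 : c ≤ 2)
    (h : HasUniqueMax a b c) (hs : ({a, b, c} : Set ℕ) ≠ {0, 1})
    (ha : (a = 2 ∧ a' = 2) ∨ (a ≤ 1 ∧ a' ≤ 1))
    (hb : (b = 2 ∧ b' = 2) ∨ (b ≤ 1 ∧ b' ≤ 1))
    (hc : (c = 2 ∧ c' = 2) ∨ (c ≤ 1 ∧ c' ≤ 1)) :
    HasUniqueMax a' b' c' := by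
  by_cases h2 : a = 2 ∨ b = 2 ∨ c = 2
  · unfold HasUniqueMax at h ⊢
    omega
  · push_neg at h2
    exfalso
    apply hs
    have h3 : (a = 1 ∧ b = 0 ∧ c = 0) ∨ (b = 1 ∧ a = 0 ∧ c = 0) ∨
        (c = 1 ∧ a = 0 ∧ b = 0) := by
      unfold HasUniqueMax at h; omega
    rcases h3 with ⟨e1, e2, e3⟩ | ⟨e1, e2, e3⟩ | ⟨e1, e2, e3⟩ <;>
      rw [e1, e2, e3] <;> ext x <;> simp <;> tauto

lemma lo_recol_poly {n : ℕ} (f : Finset (Fin n) → ℕ) (hf : IsLOPoly n f)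
    (X : Finset (Fin n)) (hX : f X ≤ 1) (i : ℕ) (hi : i ≤ 1)
    (hno : ∀ Y Z, ¬ LOBoolPartition f X Y Z) : IsLOPoly n (LORecolour f X i) := by
  obtain ⟨hbd, hp⟩ := hf
  constructor
  · intro Z
    unfold LORecolour
    split
    · omega
    · exact hbd Z
  · intro A B C dAB dAC dBC hU
    have h0 := hp A B C dAB dAC dBC hU
    have hcoord : ∀ D : Finset (Fin n),
        (f D = 2 ∧ LORecolour f X i D = 2) ∨ (f D ≤ 1 ∧ LORecolour f X i D ≤ 1) := by
      intro D
      unfold LORecolour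
      split
      · subst ‹D = X›; right; exact ⟨hX, hi⟩
      · have := hbd D; omega
    by_cases hA : A = X
    · subst hA
      have hs : ({f A, f B, f C} : Set ℕ) ≠ {0, 1} := fun hs =>
        hno B C ⟨dAB, dAC, dBC, hU, hs⟩
      exact lo_key _ _ _ _ _ _ (hbd A) (hbd B) (hbd C) h0 hs
        (hcoord A) (hcoord B) (hcoord C)
    by_cases hB : B = X
    · subst hB
      have hs : ({f B, f A, f C} : Set ℕ) ≠ {0, 1} := fun hs =>
        hno A C ⟨dAB.symm, dBC, dAC, by rw [← hU]; ac_rfl, hs⟩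
      have hs' : ({f A, f B, f C} : Set ℕ) ≠ {0, 1} := by
        intro h; apply hs; rw [← h]; ext x; simp; tauto
      exact lo_key _ _ _ _ _ _ (hbd A) (hbd B) (hbd C) h0 hs'
        (hcoord A) (hcoord B) (hcoord C)
    by_cases hC : C = X
    · subst hC
      have hs : ({f C, f A, f B} : Set ℕ) ≠ {0, 1} := fun hs =>
        hno A B ⟨dAC.symm, dBC.symm, dAB, by rw [← hU]; ac_rfl, hs⟩
      have hs' : ({f A, f B, f C} : Set ℕ) ≠ {0, 1} := by
        intro h; apply hs; rw [← h]; ext x; simp; tauto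
      exact lo_key _ _ _ _ _ _ (hbd A) (hbd B) (hbd C) h0 hs'
        (hcoord A) (hcoord B) (hcoord C)
    · have e1 : LORecolour f X i A = f A := if_neg hA
      have e2 : LORecolour f X i B = f B := if_neg hB
      have e3 : LORecolour f X i C = f C := if_neg hC
      rw [e1, e2, e3]
      exact h0

/-- A boolean set `X` is static iff it takes part in a boolean partition of `[n]`. -/
theorem stmt1 (n : ℕ) (hn : 1 ≤ n) (f : Finset (Fin n) → ℕ) (hf : IsLOPoly n f)
    (X : Finset (Fin n)) (hX : f X ≤ 1) :
    LOStatic f X ↔ ∃ Y Z : Finset (Fin n), LOBoolPartition f X Y Z := by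
  constructor
  · -- static → boolean partition; by contraposition
    intro hst
    by_contra hno
    push_neg at hno
    rcases hst with ⟨h0, hr⟩ | ⟨h1, hr⟩
    · exact hr ⟨by omega, lo_recol_poly f hf X hX 1 (by norm_num) hno⟩
    · exact hr ⟨by omega, lo_recol_poly f hf X hX 0 (by norm_num) hno⟩
  · rintro ⟨Y, Z, dXY, dXZ, dYZ, hU, hset⟩
    have hum := hf.2 X Y Z dXY dXZ dYZ hU
    have hmX : f X ∈ ({0, 1} : Set ℕ) := hset ▸ Set.mem_insert _ _
    have hmY : f Y ∈ ({0, 1} : Set ℕ) := by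
      rw [← hset]; exact Set.mem_insert_of_mem _ (Set.mem_insert _ _)
    have hmZ : f Z ∈ ({0, 1} : Set ℕ) := by
      rw [← hset]; exact Set.mem_insert_of_mem _ (Set.mem_insert_of_mem _ rfl)
    simp only [Set.mem_insert_iff, Set.mem_singleton_iff] at hmX hmY hmZ
    rcases hmX with hX0 | hX1
    · -- f X = 0 : not recolourable to 1
      left
      refine ⟨hX0, fun ⟨_, hpoly⟩ => ?_⟩
      have h2 := hpoly.2 X Y Z dXY dXZ dYZ hU
      have eX : LORecolour f X 1 X = 1 := if_pos rfl
      have eY : LORecolour f X 1 Y ≤ 1 := by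
        unfold LORecolour; split; · omega
        · omega
      have eZ : LORecolour f X 1 Z ≤ 1 := by
        unfold LORecolour; split; · omega
        · omega
      have hY1 : (f Y = 1 ∧ f Z = 0) ∨ (f Z = 1 ∧ f Y = 0) := by
        unfold HasUniqueMax at hum; omega
      rcases hY1 with ⟨hY1, hZ0⟩ | ⟨hZ1, hY0⟩
      · have eY' : LORecolour f X 1 Y = 1 := by
          unfold LORecolour; split; · rfl
          · exact hY1
        unfold HasUniqueMax at h2; omega
      · have eZ' : LORecolour f X 1 Z = 1 := by
          unfold LORecolour; split; · rfl
          · exact hZ1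
        unfold HasUniqueMax at h2; omega
    · -- f X = 1 : not recolourable to 0
      right
      refine ⟨hX1, fun ⟨_, hpoly⟩ => ?_⟩
      have h2 := hpoly.2 X Y Z dXY dXZ dYZ hU
      have hY0 : f Y = 0 ∧ f Z = 0 := by
        unfold HasUniqueMax at hum; omega
      have eX : LORecolour f X 0 X = 0 := if_pos rfl
      have eY : LORecolour f X 0 Y = 0 := by
        unfold LORecolour; split; · rfl
        · exact hY0.1
      have eZ : LORecolour f X 0 Z = 0 := by
        unfold LORecolour; split; · rfl
        · exact hY0.2
      rw [eX, eY, eZ] at h2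
      unfold HasUniqueMax at h2; omega
end

section
/- Let f be an n-ary polymorphism of (LO₂, LO₃). If X is a 2-set of f and Y is a boolean set of f such that X ⊆ Y, then Y is 2-recolourable for f. -/
open Finset

/-- If `X` is a 2-set and `Y` is a boolean set with `X ⊆ Y`, then `Y` is 2-recolourable. -/
theorem stmt3 (n : ℕ) (hn : 1 ≤ n) (f : Finset (Fin n) → ℕ) (hf : IsLOPoly n f)
    (X Y : Finset (Fin n)) (hX : f X = 2) (hY : f Y ≤ 1) (hXY : X ⊆ Y) :
    LORecolourableTo f Y 2 := by
  obtain ⟨hbound, hpoly⟩ := hf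
  have hYne : Y ≠ ∅ := by
    intro h
    have hXe : X = ∅ := Finset.subset_empty.mp (h ▸ hXY)
    rw [h, ← hXe, hX] at hY; omega
  have key : ∀ B C : Finset (Fin n), Disjoint Y B → Disjoint Y C → Disjoint B C →
      Y ∪ B ∪ C = Finset.univ → f B < 2 := by
    intro B C dYB dYC dBC hU
    have dXB : Disjoint X B := dYB.mono_left hXY
    have dXC' : Disjoint X (C ∪ (Y \ X)) := by
      simp [Finset.disjoint_union_right, dYC.mono_left hXY, Finset.sdiff_disjoint.symm]
    have dBC' : Disjoint B (C ∪ (Y \ X)) := by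
      simp [Finset.disjoint_union_right, dBC, (dYB.mono_left Finset.sdiff_subset).symm]
    have hU' : X ∪ B ∪ (C ∪ (Y \ X)) = Finset.univ := by
      rw [← hU]
      ext a
      have hx := @hXY a
      simp only [Finset.mem_union, Finset.mem_sdiff]
      tauto
    have h := hpoly X B (C ∪ (Y \ X)) dXB dXC' dBC' hU'
    have h1 := hbound B
    have h2 := hbound (C ∪ (Y \ X))
    rw [hX] at h
    rcases h with ⟨h, _⟩ | ⟨h, _⟩ | ⟨_, h⟩ <;> omega
  refine ⟨by omega, fun Z => ?_, fun A B C dAB dAC dBC hU => ?_⟩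
  · unfold LORecolour
    split
    · omega
    · exact hbound Z
  · by_cases hA : A = Y
    · have hB : B ≠ Y := by intro h; apply hYne; rw [hA, h] at dAB; simpa using dAB
      have hC : C ≠ Y := by intro h; apply hYne; have d := dAC; rw [hA, h] at d; simpa using d
      rw [hA] at dAB dAC hU
      simp only [LORecolour, if_pos hA, if_neg hB, if_neg hC]
      have h1 := key B C dAB dAC dBC hU
      have h2 := key C B dAC dAB dBC.symm (by rw [Finset.union_right_comm]; exact hU)
      exact Or.inl ⟨h1, h2⟩
    · by_cases hB : B = Y
      · have hC : C ≠ Y := by intro h; apply hYne; have d := dBC; rw [hB, h] at d; simpa using d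
        rw [hB] at dAB dBC hU
        simp only [LORecolour, if_pos hB, if_neg hA, if_neg hC]
        have hU1 : Y ∪ A ∪ C = Finset.univ := by
          rw [Finset.union_comm A Y] at hU; exact hU
        have h1 := key A C dAB.symm dBC dAC hU1
        have h2 := key C A dBC dAB.symm dAC.symm
          (by rw [Finset.union_right_comm]; exact hU1)
        exact Or.inr (Or.inl ⟨h1, h2⟩)
      · by_cases hC : C = Y
        · rw [hC] at dAC dBC hU
          simp only [LORecolour, if_pos hC, if_neg hA, if_neg hB]
          have hU1 : Y ∪ A ∪ B = Finset.univ := by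
            rw [Finset.union_comm (A ∪ B) Y, ← Finset.union_assoc] at hU; exact hU
          have h1 := key A B dAC.symm dBC.symm dAB hU1
          have h2 := key B A dBC.symm dAC.symm dAB.symm
            (by rw [Finset.union_right_comm]; exact hU1)
          exact Or.inr (Or.inr ⟨h1, h2⟩)
        · simp only [LORecolour, if_neg hA, if_neg hB, if_neg hC]
          exact hpoly A B C dAB dAC dBC hU
end

section
/- Let f be an upwards closed n-ary polymorphism of (LO₂, LO₃). If X, Y ⊆ [n] are disjoint non-empty boolean sets of f with X ∪ Y = [n], then both X and Y are 2-recolourable for f. -/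
open Finset

lemma key_recol {n : ℕ} {f : Finset (Fin n) → ℕ} (hf : IsLOPoly n f)
    (huc : LOUpwardsClosed f) {X : Finset (Fin n)} (hXne : X.Nonempty)
    (hX : f X ≤ 1) (hXc : f Xᶜ ≤ 1) : LORecolourableTo f X 2 := by
  have hsub : ∀ B : Finset (Fin n), Disjoint X B → f B ≤ 1 := by
    intro B hB
    have hBsub : B ⊆ Xᶜ := fun a ha =>
      Finset.mem_compl.mpr fun hx => (Finset.disjoint_left.mp hB hx ha)
    have h2 := hf.1 B
    rcases Nat.lt_or_ge (f B) 2 with h | h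
    · omega
    · have hB2 : f B = 2 := by omega
      have := huc B Xᶜ hB2 hBsub
      omega
  have hne : ∀ B : Finset (Fin n), Disjoint X B → B ≠ X := by
    rintro B hB rfl
    exact hXne.ne_empty (disjoint_self.mp hB)
  refine ⟨by omega, ?_, ?_⟩
  · intro Z
    unfold LORecolour
    split
    · exact le_refl 2
    · exact hf.1 Z
  intro A B C dAB dAC dBC hcov
  unfold LORecolour
  by_cases hA : A = X
  · subst hA
    rw [if_pos rfl, if_neg (hne B dAB), if_neg (hne C dAC)]
    have h1 := hsub B dAB
    have h2 := hsub C dAC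
    exact Or.inl ⟨by omega, by omega⟩
  · by_cases hB : B = X
    · subst hB
      rw [if_pos rfl, if_neg (hne A dAB.symm), if_neg (hne C dBC)]
      have h1 := hsub A dAB.symm
      have h2 := hsub C dBC
      exact Or.inr (Or.inl ⟨by omega, by omega⟩)
    · by_cases hC : C = X
      · subst hC
        rw [if_pos rfl, if_neg (hne A dAC.symm), if_neg (hne B dBC.symm)]
        have h1 := hsub A dAC.symm
        have h2 := hsub B dBC.symm
        exact Or.inr (Or.inr ⟨by omega, by omega⟩)
      · rw [if_neg hA, if_neg hB, if_neg hC]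
        exact hf.2 A B C dAB dAC dBC hcov

/-- For an upwards closed polymorphism, complementary disjoint non-empty boolean sets
are both 2-recolourable. -/
theorem stmt4 (n : ℕ) (hn : 1 ≤ n) (f : Finset (Fin n) → ℕ) (hf : IsLOPoly n f)
    (huc : LOUpwardsClosed f) (X Y : Finset (Fin n)) (hdisj : Disjoint X Y)
    (hXne : X.Nonempty) (hYne : Y.Nonempty) (hX : f X ≤ 1) (hY : f Y ≤ 1)
    (hcover : X ∪ Y = Finset.univ) :
    LORecolourableTo f X 2 ∧ LORecolourableTo f Y 2 := by
  have hYX : Y = Xᶜ := by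
    ext a
    simp only [Finset.mem_compl]
    constructor
    · intro ha hx
      exact Finset.disjoint_left.mp hdisj hx ha
    · intro hx
      have : a ∈ X ∪ Y := hcover ▸ Finset.mem_univ a
      rcases Finset.mem_union.mp this with h | h
      · exact absurd h hx
      · exact h
  have hXY : X = Yᶜ := by rw [hYX, compl_compl]
  constructor
  · exact key_recol hf huc hXne hX (hYX ▸ hY)
  · exact key_recol hf huc hYne hY (hXY ▸ hX)
end

section
/- Every n-ary polymorphism f of (LO₂, LO₃) has a saturation. Moreover, if f has arity n ≥ 7 and no small 2-set, then f has a pure saturation. -/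
open Finset

section Aux

variable {n : ℕ}

lemma LO_empty_lt_univ {g : Finset (Fin n) → ℕ} (hg : IsLOPoly n g) :
    g ∅ < g Finset.univ := by
  have h := hg.2 ∅ ∅ Finset.univ (by simp) (by simp) (by simp) (by simp)
  unfold HasUniqueMax at h
  omega

lemma LO_recolour_poly {g : Finset (Fin n) → ℕ} (hg : IsLOPoly n g)
    (T : Finset (Fin n)) (hT : T ≠ ∅)
    (h2 : ∀ A B : Finset (Fin n), Disjoint T A → Disjoint T B → Disjoint A B →
      T ∪ A ∪ B = Finset.univ → g A ≤ 1 ∧ g B ≤ 1) :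
    IsLOPoly n (LORecolour g T 2) := by
  constructor
  · intro X
    unfold LORecolour
    split
    · exact le_refl 2
    · exact hg.1 X
  intro X Y Z dXY dXZ dYZ hU
  unfold LORecolour
  by_cases hX : X = T
  · subst hX
    have hY : Y ≠ X := by rintro rfl; exact hT (by simpa using disjoint_self.mp dXY)
    have hZ : Z ≠ X := by rintro rfl; exact hT (by simpa using disjoint_self.mp dXZ)
    rw [if_pos rfl, if_neg hY, if_neg hZ]
    obtain ⟨h1, h2'⟩ := h2 Y Z dXY dXZ dYZ hU
    exact Or.inl ⟨by omega, by omega⟩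
  by_cases hY : Y = T
  · subst hY
    have hZ : Z ≠ Y := by rintro rfl; exact hT (by simpa using disjoint_self.mp dYZ)
    rw [if_pos rfl, if_neg hX, if_neg hZ]
    have hU' : Y ∪ X ∪ Z = Finset.univ := by
      rw [← hU]; ext a
      simp only [Finset.mem_union]; tauto
    obtain ⟨h1, h2'⟩ := h2 X Z dXY.symm dYZ dXZ hU'
    exact Or.inr (Or.inl ⟨by omega, by omega⟩)
  by_cases hZ : Z = T
  · subst hZ
    rw [if_pos rfl, if_neg hX, if_neg hY]
    have hU' : Z ∪ X ∪ Y = Finset.univ := by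
      rw [← hU]; ext a
      simp only [Finset.mem_union]; tauto
    obtain ⟨h1, h2'⟩ := h2 X Y dXZ.symm dYZ.symm dXY hU'
    exact Or.inr (Or.inr ⟨by omega, by omega⟩)
  · simp only [if_neg hX, if_neg hY, if_neg hZ]
    exact hg.2 X Y Z dXY dXZ dYZ hU

lemma LO_step_exists (hn : 1 ≤ n) {g : Finset (Fin n) → ℕ} (hg : IsLOPoly n g)
    (hns : ¬ LOSaturated g) :
    ∃ T, g T ≤ 1 ∧ IsLOPoly n (LORecolour g T 2) ∧
      (7 ≤ n → LONoSmallTwoSet g → 4 ≤ T.card) := by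
  have hb := hg.1
  have h0 : g ∅ ≤ 1 := by have := LO_empty_lt_univ hg; have := hb Finset.univ; omega
  by_cases hUC : LOUpwardsClosed g
  · -- complement case
    have hex : ∃ X : Finset (Fin n), g X ≤ 1 ∧ g Xᶜ ≠ 2 := by
      by_contra h
      push_neg at h
      exact hns ⟨hUC, fun X hX => h X hX⟩
    obtain ⟨X, hX1, hXc⟩ := hex
    have hXc1 : g Xᶜ ≤ 1 := by have := hb Xᶜ; omega
    -- key: recolouring Xᶜ works (when nonempty), using upward closedness
    have hcompl : Xᶜ ≠ (∅ : Finset (Fin n)) →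
        ∀ A B : Finset (Fin n), Disjoint Xᶜ A → Disjoint Xᶜ B → Disjoint A B →
          Xᶜ ∪ A ∪ B = Finset.univ → g A ≤ 1 ∧ g B ≤ 1 := by
      intro _ A B dA dB dAB hU
      have hsubA : A ⊆ X := by
        intro a ha
        by_contra hax
        exact (Finset.disjoint_left.mp dA) (Finset.mem_compl.mpr hax) ha
      have hsubB : B ⊆ X := by
        intro a ha
        by_contra hax
        exact (Finset.disjoint_left.mp dB) (Finset.mem_compl.mpr hax) ha
      constructor
      · by_contra h
        have : g A = 2 := by have := hb A; omega
        have := hUC A X this hsubA; omega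
      · by_contra h
        have : g B = 2 := by have := hb B; omega
        have := hUC B X this hsubB; omega
    by_cases hp : 7 ≤ n ∧ LONoSmallTwoSet g
    · obtain ⟨hn7, hsm⟩ := hp
      by_cases hc : 4 ≤ Xᶜ.card
      · have hne : Xᶜ ≠ (∅ : Finset (Fin n)) := by
          intro h; rw [h] at hc; simp at hc
        exact ⟨Xᶜ, hXc1, LO_recolour_poly hg Xᶜ hne (hcompl hne), fun _ _ => hc⟩
      · -- Xᶜ small: recolour X itself, its partitions have small parts
        have hcard : X.card + Xᶜ.card = n := by
          have := Finset.card_add_card_compl X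
          simpa using this
        have hX4 : 4 ≤ X.card := by omega
        have hne : X ≠ (∅ : Finset (Fin n)) := by
          intro h; rw [h] at hX4; simp at hX4
        refine ⟨X, hX1, LO_recolour_poly hg X hne ?_, fun _ _ => hX4⟩
        intro A B dA dB dAB hU
        have hsubA : A ⊆ Xᶜ := by
          intro a ha
          exact Finset.mem_compl.mpr (fun hax => (Finset.disjoint_left.mp dA) hax ha)
        have hsubB : B ⊆ Xᶜ := by
          intro a ha
          exact Finset.mem_compl.mpr (fun hax => (Finset.disjoint_left.mp dB) hax ha)
        constructor
        · by_contra h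
          have h2 : g A = 2 := by have := hb A; omega
          have := hsm A h2
          have := Finset.card_le_card hsubA; omega
        · by_contra h
          have h2 : g B = 2 := by have := hb B; omega
          have := hsm B h2
          have := Finset.card_le_card hsubB; omega
    · by_cases hne : Xᶜ = (∅ : Finset (Fin n))
      · -- X = univ, recolour univ
        have hXu : X = Finset.univ := by
          rw [← compl_compl X, hne, Finset.compl_empty]
        have : Nonempty (Fin n) := ⟨⟨0, hn⟩⟩
        have hneu : (Finset.univ : Finset (Fin n)) ≠ ∅ := Finset.univ_nonempty.ne_empty
        refine ⟨Finset.univ, hXu ▸ hX1, LO_recolour_poly hg _ hneu ?_,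
          fun _ _ => absurd ⟨‹_›, ‹_›⟩ hp⟩
        intro A B dA dB dAB hU
        have hA : A = ∅ := by
          ext a; simp only [Finset.notMem_empty, iff_false]
          exact fun ha => (Finset.disjoint_left.mp dA) (Finset.mem_univ a) ha
        have hB : B = ∅ := by
          ext a; simp only [Finset.notMem_empty, iff_false]
          exact fun ha => (Finset.disjoint_left.mp dB) (Finset.mem_univ a) ha
        rw [hA, hB]; exact ⟨h0, h0⟩
      · exact ⟨Xᶜ, hXc1, LO_recolour_poly hg Xᶜ hne (hcompl hne),
          fun h1 h2 => absurd ⟨h1, h2⟩ hp⟩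
  · -- not upward closed
    unfold LOUpwardsClosed at hUC
    push_neg at hUC
    obtain ⟨X, Y, hX2, hXY, hY2⟩ := hUC
    have hY1 : g Y ≤ 1 := by have := hb Y; omega
    have hXne : X ≠ (∅ : Finset (Fin n)) := by
      intro h; rw [h] at hX2; omega
    have hYne : Y ≠ (∅ : Finset (Fin n)) := by
      intro h
      rw [h] at hXY
      exact hXne (Finset.subset_empty.mp hXY)
    have key : ∀ A B : Finset (Fin n), Disjoint Y A → Disjoint Y B → Disjoint A B →
        Y ∪ A ∪ B = Finset.univ → g A ≤ 1 := by
      intro A B dA dB dAB hU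
      have dXA : Disjoint X A := Finset.disjoint_of_subset_left hXY dA
      have dXC : Disjoint X (B ∪ (Y \ X)) :=
        Finset.disjoint_union_right.mpr
          ⟨Finset.disjoint_of_subset_left hXY dB, Finset.disjoint_sdiff⟩
      have dAC : Disjoint A (B ∪ (Y \ X)) :=
        Finset.disjoint_union_right.mpr
          ⟨dAB, Finset.disjoint_of_subset_right (Finset.sdiff_subset) dA.symm⟩
      have hU' : X ∪ A ∪ (B ∪ (Y \ X)) = Finset.univ := by
        ext a
        have ha : a ∈ Y ∪ A ∪ B := by rw [hU]; exact Finset.mem_univ a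
        simp only [Finset.mem_union, Finset.mem_sdiff] at ha ⊢
        have hxy : a ∈ X → a ∈ Y := fun h => hXY h
        simp only [Finset.mem_univ, iff_true]
        tauto
      have hum := hg.2 X A (B ∪ (Y \ X)) dXA dXC dAC hU'
      unfold HasUniqueMax at hum
      have := hb A
      have := hb (B ∪ (Y \ X))
      omega
    refine ⟨Y, hY1, LO_recolour_poly hg Y hYne ?_, ?_⟩
    · intro A B dA dB dAB hU
      refine ⟨key A B dA dB dAB hU, key B A dB dA dAB.symm ?_⟩
      rw [← hU]; ext a; simp only [Finset.mem_union]; tauto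
    · intro _ hsm
      exact le_trans (hsm X hX2) (Finset.card_le_card hXY)

lemma LO_sat_main (hn : 1 ≤ n) :
    ∀ k (g : Finset (Fin n) → ℕ),
      (Finset.univ.filter (fun X : Finset (Fin n) => g X ≠ 2)).card ≤ k →
      IsLOPoly n g →
      (∃ h : Finset (Fin n) → ℕ, IsLOSaturation g h) ∧
      (7 ≤ n → LONoSmallTwoSet g →
        ∃ h : Finset (Fin n) → ℕ, IsLOPureSaturation g h) := by
  intro k
  induction k with
  | zero =>
    intro g hm hg
    exfalso
    have hall : ∀ X : Finset (Fin n), g X = 2 := by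
      intro X
      by_contra h
      have hmem : X ∈ Finset.univ.filter (fun X : Finset (Fin n) => g X ≠ 2) := by
        simp [h]
      have := Finset.card_pos.mpr ⟨X, hmem⟩
      omega
    have := LO_empty_lt_univ hg
    rw [hall ∅, hall Finset.univ] at this
    omega
  | succ k ih =>
    intro g hm hg
    by_cases hs : LOSaturated g
    · exact ⟨⟨g, hg, hs, Relation.ReflTransGen.refl⟩,
        fun _ hsm => ⟨g, ⟨hg, hs, Relation.ReflTransGen.refl⟩, hsm⟩⟩
    obtain ⟨T, hT1, hT2, hT3⟩ := LO_step_exists hn hg hs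
    set g' := LORecolour g T 2 with hg'def
    have hstep : LORecolourStep g g' := ⟨hT2, T, hT1, rfl⟩
    have hss : Finset.univ.filter (fun X : Finset (Fin n) => g' X ≠ 2) ⊂
        Finset.univ.filter (fun X : Finset (Fin n) => g X ≠ 2) := by
      constructor
      · intro X hX
        simp only [Finset.mem_filter, Finset.mem_univ, true_and] at hX ⊢
        intro h
        apply hX
        rw [hg'def]
        unfold LORecolour
        split
        · rfl
        · exact h
      · intro hsub
        have hT : T ∈ Finset.univ.filter (fun X : Finset (Fin n) => g X ≠ 2) := by
          simp only [Finset.mem_filter, Finset.mem_univ, true_and]; omega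
        have hmem := hsub hT
        simp only [Finset.mem_filter, Finset.mem_univ, true_and] at hmem
        apply hmem
        rw [hg'def]; unfold LORecolour; simp
    have hm' : (Finset.univ.filter (fun X : Finset (Fin n) => g' X ≠ 2)).card ≤ k := by
      have := Finset.card_lt_card hss
      omega
    constructor
    · obtain ⟨h, hh1, hh2, hh3⟩ := (ih g' hm' hT2).1
      exact ⟨h, hh1, hh2, Relation.ReflTransGen.head hstep hh3⟩
    · intro hn7 hsm
      have hsm' : LONoSmallTwoSet g' := by
        intro X hX
        rw [hg'def] at hX
        unfold LORecolour at hX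
        by_cases hXT : X = T
        · rw [hXT]; exact hT3 hn7 hsm
        · rw [if_neg hXT] at hX; exact hsm X hX
      obtain ⟨h, ⟨hh1, hh2, hh3⟩, hh4⟩ := (ih g' hm' hT2).2 hn7 hsm'
      exact ⟨h, ⟨hh1, hh2, Relation.ReflTransGen.head hstep hh3⟩, hh4⟩

end Aux

/-- Every polymorphism has a saturation; moreover, if it has arity at least 7 and no
small 2-set, then it has a pure saturation. -/
theorem stmt5 (n : ℕ) (hn : 1 ≤ n) (f : Finset (Fin n) → ℕ) (hf : IsLOPoly n f) :
    (∃ g : Finset (Fin n) → ℕ, IsLOSaturation f g) ∧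
    (7 ≤ n → LONoSmallTwoSet f → ∃ g : Finset (Fin n) → ℕ, IsLOPureSaturation f g) := by
  exact LO_sat_main hn (Finset.univ.filter (fun X : Finset (Fin n) => f X ≠ 2)).card f le_rfl hf
end

section
/- Let f be a saturated n-ary polymorphism of (LO₂, LO₃). A boolean set X of f is static for f if, and only if, X ∩ T_f is non-empty. -/
open Finset

/-- Every 2-set contains a minimal 2-set. -/
lemma exists_minTwoSet {n : ℕ} (f : Finset (Fin n) → ℕ) {W : Finset (Fin n)}
    (hW : f W = 2) : ∃ M, M ⊆ W ∧ LOMinTwoSet f M := by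
  obtain ⟨M, hMmem, hMmin⟩ := Finset.exists_min_image
    ((W.powerset).filter fun V => f V = 2) Finset.card
    ⟨W, by simp [hW]⟩
  simp only [Finset.mem_filter, Finset.mem_powerset] at hMmem
  refine ⟨M, hMmem.1, hMmem.2, ?_⟩
  intro V hV hV2
  have hVW : V ⊆ W := hV.subset.trans hMmem.1
  have : M.card ≤ V.card := hMmin V (by simp [Finset.mem_filter, Finset.mem_powerset, hV2, hVW])
  exact absurd this (not_le.mpr (Finset.card_lt_card hV))

/-- If `X` is boolean and misses `T_f`, then in any partition `(X, Y, Z)` one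
of the other parts is a 2-set. -/
lemma LOkey {n : ℕ} (f : Finset (Fin n) → ℕ) (hf : IsLOPoly n f) (hsat : LOSaturated f)
    (X : Finset (Fin n)) (hX : f X ≤ 1)
    (hT : ∀ a ∈ X, a ∉ LOTSet f)
    (Y Z : Finset (Fin n)) (hXY : Disjoint X Y) (hXZ : Disjoint X Z) (hYZ : Disjoint Y Z)
    (hu : X ∪ Y ∪ Z = Finset.univ) : f Y = 2 ∨ f Z = 2 := by
  by_contra h
  push_neg at h
  have hY1 : f Y ≤ 1 := by have := hf.1 Y; omega
  have hZ1 : f Z ≤ 1 := by have := hf.1 Z; omega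
  have hYc : f Yᶜ = 2 := hsat.2 Y hY1
  have hYc' : Yᶜ = X ∪ Z := by
    ext a
    have hau : a ∈ X ∪ Y ∪ Z := hu ▸ Finset.mem_univ a
    simp only [Finset.mem_union] at hau
    simp only [Finset.mem_compl, Finset.mem_union]
    constructor
    · intro ha; tauto
    · rintro (ha | ha)
      · exact fun hY => (Finset.disjoint_left.mp hXY ha) hY
      · exact fun hY => (Finset.disjoint_left.mp hYZ hY) ha
  rw [hYc'] at hYc
  obtain ⟨M, hMsub, hM⟩ := exists_minTwoSet f hYc
  have hMZ : M ⊆ Z := by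
    intro a haM
    have haXZ := hMsub haM
    simp only [Finset.mem_union] at haXZ
    rcases haXZ with haX | haZ
    · exact absurd ⟨M, hM, haM⟩ (hT a haX)
    · exact haZ
  exact absurd (hsat.1 M Z hM.1 hMZ) (by omega)

/-- If `X` is boolean and misses `T_f`, then recolouring `X` to any boolean
value gives a polymorphism. -/
lemma LOrecolour_poly {n : ℕ} (hn : 1 ≤ n) (f : Finset (Fin n) → ℕ) (hf : IsLOPoly n f)
    (hsat : LOSaturated f) (X : Finset (Fin n)) (hX : f X ≤ 1)
    (hT : ∀ a ∈ X, a ∉ LOTSet f) (b : ℕ) (hb : b ≤ 1) :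
    IsLOPoly n (LORecolour f X b) := by
  constructor
  · intro W
    unfold LORecolour
    split
    · omega
    · exact hf.1 W
  intro A B C hAB hAC hBC hu
  have hbound := hf.1
  have hum := hf.2 A B C hAB hAC hBC hu
  simp only [LORecolour]
  by_cases hA : A = X <;> by_cases hB : B = X <;> by_cases hC : C = X
  · -- all three equal X: impossible
    exfalso
    rw [hA, hB] at hAB
    have hXe : X = ∅ := by simpa using disjoint_self.mp hAB
    have hmem : (⟨0, hn⟩ : Fin n) ∈ A ∪ B ∪ C := hu ▸ Finset.mem_univ _
    rw [hA, hB, hC, hXe] at hmem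
    simp at hmem
  · -- A = X, B = X, C ≠ X
    rw [if_pos hA, if_pos hB, if_neg hC]
    have hXe : X = ∅ := by rw [hA, hB] at hAB; simpa using disjoint_self.mp hAB
    have hC2 : f C = 2 := by
      have hCuniv : C = Finset.univ := by
        rw [hA, hB, hXe] at hu; simpa using hu
      have := hsat.2 X hX
      rw [hXe, Finset.compl_empty] at this
      rw [hCuniv]; exact this
    unfold HasUniqueMax; omega
  · -- A = X, B ≠ X, C = X
    rw [if_pos hA, if_neg hB, if_pos hC]
    have hXe : X = ∅ := by rw [hA, hC] at hAC; simpa using disjoint_self.mp hAC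
    have hB2 : f B = 2 := by
      have hBuniv : B = Finset.univ := by
        rw [hA, hC, hXe] at hu; simpa using hu
      have := hsat.2 X hX
      rw [hXe, Finset.compl_empty] at this
      rw [hBuniv]; exact this
    unfold HasUniqueMax; omega
  · -- A = X only
    rw [if_pos hA, if_neg hB, if_neg hC]
    subst hA
    have hkey := LOkey f hf hsat A hX hT B C hAB hAC hBC hu
    have h1 := hbound B
    have h2 := hbound C
    unfold HasUniqueMax at hum ⊢; omega
  · -- B = X, A ≠ X, C = X
    rw [if_neg hA, if_pos hB, if_pos hC]
    have hXe : X = ∅ := by rw [hB, hC] at hBC; simpa using disjoint_self.mp hBC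
    have hA2 : f A = 2 := by
      have hAuniv : A = Finset.univ := by
        rw [hB, hC, hXe] at hu; simpa using hu
      have := hsat.2 X hX
      rw [hXe, Finset.compl_empty] at this
      rw [hAuniv]; exact this
    unfold HasUniqueMax; omega
  · -- B = X only
    rw [if_neg hA, if_pos hB, if_neg hC]
    subst hB
    have hu' : B ∪ A ∪ C = Finset.univ := by
      rw [Finset.eq_univ_iff_forall]
      intro a
      have := hu ▸ Finset.mem_univ a
      simp only [Finset.mem_union] at this ⊢
      tauto
    have hkey := LOkey f hf hsat B hX hT A C hAB.symm hBC hAC hu'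
    have h1 := hbound A
    have h2 := hbound C
    unfold HasUniqueMax at hum ⊢; omega
  · -- C = X only
    rw [if_neg hA, if_neg hB, if_pos hC]
    subst hC
    have hu' : C ∪ A ∪ B = Finset.univ := by
      rw [Finset.eq_univ_iff_forall]
      intro a
      have := hu ▸ Finset.mem_univ a
      simp only [Finset.mem_union] at this ⊢
      tauto
    have hkey := LOkey f hf hsat C hX hT A B hAC.symm hBC.symm hAB hu'
    have h1 := hbound A
    have h2 := hbound B
    unfold HasUniqueMax at hum ⊢; omega
  · -- none equal X
    rw [if_neg hA, if_neg hB, if_neg hC]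
    exact hum

/-- If `X` contains an element of a minimal 2-set, then `X` is static. -/
lemma LOstatic_of_mem {n : ℕ} (f : Finset (Fin n) → ℕ) (hf : IsLOPoly n f)
    (hsat : LOSaturated f) (X : Finset (Fin n)) (hX : f X ≤ 1)
    {a : Fin n} (haX : a ∈ X) {M : Finset (Fin n)} (hM : LOMinTwoSet f M)
    (haM : a ∈ M) : LOStatic f X := by
  set Y : Finset (Fin n) := M \ X with hYdef
  set Z : Finset (Fin n) := (X ∪ M)ᶜ with hZdef
  have hXY : Disjoint X Y := by
    rw [Finset.disjoint_left]
    intro x hx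
    simp [hYdef, hx]
  have hXZ : Disjoint X Z := by
    rw [Finset.disjoint_left]
    intro x hx
    simp [hZdef, hx]
  have hYZ : Disjoint Y Z := by
    rw [Finset.disjoint_left]
    intro x hx
    simp only [hYdef, Finset.mem_sdiff] at hx
    simp [hZdef, hx.1]
  have hu : X ∪ Y ∪ Z = Finset.univ := by
    rw [Finset.eq_univ_iff_forall]
    intro x
    simp only [hYdef, hZdef, Finset.mem_union, Finset.mem_sdiff, Finset.mem_compl]
    tauto
  have hY1 : f Y ≤ 1 := by
    have hss : Y ⊂ M := by
      refine (Finset.sdiff_subset).ssubset_of_ne ?_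
      intro h
      rw [← h] at haM
      exact (Finset.mem_sdiff.mp haM).2 haX
    have := hM.2 Y hss
    have := hf.1 Y
    omega
  have hZ1 : f Z ≤ 1 := by
    by_contra hZ2'
    have hZ2 : f Z = 2 := by have := hf.1 Z; omega
    have hd1 : Disjoint Z M := by
      rw [Finset.disjoint_left]
      intro x hx
      simp only [hZdef, Finset.mem_compl, Finset.mem_union] at hx
      tauto
    have hd2 : Disjoint Z (X \ M) := by
      rw [Finset.disjoint_left]
      intro x hx
      simp only [hZdef, Finset.mem_compl, Finset.mem_union] at hx
      simp only [Finset.mem_sdiff]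
      tauto
    have hd3 : Disjoint M (X \ M) := by
      rw [Finset.disjoint_left]
      intro x hx
      simp [hx]
    have hu2 : Z ∪ M ∪ (X \ M) = Finset.univ := by
      rw [Finset.eq_univ_iff_forall]
      intro x
      simp only [hZdef, Finset.mem_union, Finset.mem_compl, Finset.mem_sdiff]
      tauto
    have := hf.2 Z M (X \ M) hd1 hd2 hd3 hu2
    rw [hZ2, hM.1] at this
    unfold HasUniqueMax at this
    have := hf.1 (X \ M)
    omega
  have hum := hf.2 X Y Z hXY hXZ hYZ hu
  have hYX : Y ≠ X := by
    intro h
    have : a ∈ Y := h.symm ▸ haX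
    rw [hYdef] at this
    exact (Finset.mem_sdiff.mp this).2 haX
  have hZX : Z ≠ X := by
    intro h
    have : a ∈ Z := h.symm ▸ haX
    rw [hZdef] at this
    simp only [Finset.mem_compl, Finset.mem_union] at this
    exact this (Or.inl haX)
  have hcase : f X = 0 ∨ f X = 1 := by omega
  rcases hcase with h0 | h1
  · left
    refine ⟨h0, ?_⟩
    rintro ⟨-, hpoly⟩
    have h2 := hpoly.2 X Y Z hXY hXZ hYZ hu
    simp only [LORecolour] at h2
    rw [if_pos trivial, if_neg hYX, if_neg hZX] at h2
    unfold HasUniqueMax at hum h2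
    omega
  · right
    refine ⟨h1, ?_⟩
    rintro ⟨-, hpoly⟩
    have h2 := hpoly.2 X Y Z hXY hXZ hYZ hu
    simp only [LORecolour] at h2
    rw [if_pos trivial, if_neg hYX, if_neg hZX] at h2
    unfold HasUniqueMax at hum h2
    omega

/-- For a saturated polymorphism `f`, a boolean set `X` is static iff `X ∩ T_f ≠ ∅`. -/
theorem stmt6 (n : ℕ) (hn : 1 ≤ n) (f : Finset (Fin n) → ℕ) (hf : IsLOPoly n f)
    (hsat : LOSaturated f) (X : Finset (Fin n)) (hX : f X ≤ 1) :
    LOStatic f X ↔ (↑X ∩ LOTSet f : Set (Fin n)).Nonempty := by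
  constructor
  · intro hst
    by_contra hne
    rw [Set.not_nonempty_iff_eq_empty] at hne
    have hT : ∀ a ∈ X, a ∉ LOTSet f := by
      intro a haX haT
      have : a ∈ (↑X ∩ LOTSet f : Set (Fin n)) := ⟨haX, haT⟩
      rw [hne] at this
      exact this
    rcases hst with ⟨h0, hnr⟩ | ⟨h1, hnr⟩
    · exact hnr ⟨by omega, LOrecolour_poly hn f hf hsat X hX hT 1 le_rfl⟩
    · exact hnr ⟨by omega, LOrecolour_poly hn f hf hsat X hX hT 0 (by omega)⟩
  · rintro ⟨a, haX, M, hM, haM⟩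
    exact LOstatic_of_mem f hf hsat X hX (Finset.mem_coe.mp haX) hM haM
end

section
/- Let f be an n-ary polymorphism of (LO₂, LO₃) with n ≥ 7 and no small 2-set, let X be a boolean set of f, and let g be a pure saturation of f. If |X| ≥ n − 3 or there is a proper subset Z of X with f(Z) = 2, then g(X) ≠ f(X). If, in addition, g is the unique pure saturation of f, then the converse holds: g(X) ≠ f(X) implies |X| ≥ n − 3 or there is a proper subset Z of X with f(Z) = 2. -/
open Finset

/-- Along a sequence of recolouring steps, values only change from boolean to 2. -/
lemma LOSat_mono {n : ℕ} {f g : Finset (Fin n) → ℕ}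
    (h : Relation.ReflTransGen LORecolourStep f g) :
    ∀ S, g S = f S ∨ (f S ≤ 1 ∧ g S = 2) := by
  induction h with
  | refl => exact fun S => Or.inl rfl
  | tail _ hstep ih =>
    intro S
    obtain ⟨_, Y, hY1, rfl⟩ := hstep
    unfold LORecolour
    by_cases hsy : S = Y
    · subst hsy
      rcases ih S with h' | h'
      · exact Or.inr ⟨by omega, by simp⟩
      · exact Or.inr ⟨h'.1, by simp⟩
    · simp only [if_neg hsy]; exact ih S

/-- Two 2-sets of a polymorphism intersect. -/
lemma LOPoly_int {n : ℕ} {g : Finset (Fin n) → ℕ} (hg : IsLOPoly n g) {A B : Finset (Fin n)}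
    (hA : g A = 2) (hB : g B = 2) (d : Disjoint A B) : False := by
  have h := hg.2 A B (A ∪ B)ᶜ d
    (disjoint_compl_right.mono_left subset_union_left)
    (disjoint_compl_right.mono_left subset_union_right)
    (union_compl _)
  rw [hA, hB] at h
  have := hg.1 (A ∪ B)ᶜ
  rcases h with ⟨h1, h2⟩ | ⟨h1, h2⟩ | ⟨h1, h2⟩ <;> omega

/-- A function that is 2 exactly on an intersecting family extending the 2-sets of a
polymorphism, and agrees with the polymorphism elsewhere, is a polymorphism. -/
lemma LOPoly_of_spec {n : ℕ} (f : Finset (Fin n) → ℕ) (hf : IsLOPoly n f)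
    (Q : Finset (Fin n) → Prop)
    (hint : ∀ A B, Q A → Q B → Disjoint A B → False)
    (h2 : ∀ S, f S = 2 → Q S)
    (h : Finset (Fin n) → ℕ)
    (hQ2 : ∀ S, Q S → h S = 2) (hQf : ∀ S, ¬ Q S → h S = f S) :
    IsLOPoly n h := by
  have hb : ∀ S, ¬ Q S → f S ≤ 1 := by
    intro S hS
    have h1 := hf.1 S
    by_contra hgt
    exact hS (h2 S (by omega))
  constructor
  · intro S
    by_cases hq : Q S
    · rw [hQ2 S hq]
    · rw [hQf S hq]; exact hf.1 S
  · intro A B C dAB dAC dBC hu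
    by_cases qA : Q A <;> by_cases qB : Q B <;> by_cases qC : Q C
    · exact (hint A B qA qB dAB).elim
    · exact (hint A B qA qB dAB).elim
    · exact (hint A C qA qC dAC).elim
    · rw [hQ2 A qA, hQf B qB, hQf C qC]
      exact Or.inl ⟨by have := hb B qB; omega, by have := hb C qC; omega⟩
    · exact (hint B C qB qC dBC).elim
    · rw [hQf A qA, hQ2 B qB, hQf C qC]
      exact Or.inr (Or.inl ⟨by have := hb A qA; omega, by have := hb C qC; omega⟩)
    · rw [hQf A qA, hQf B qB, hQ2 C qC]
      exact Or.inr (Or.inr ⟨by have := hb A qA; omega, by have := hb B qB; omega⟩)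
    · rw [hQf A qA, hQf B qB, hQf C qC]
      exact hf.2 A B C dAB dAC dBC hu

/-- Characterisation of the boolean sets recoloured along a pure saturation. -/
theorem stmt7 (n : ℕ) (hn : 7 ≤ n) (f : Finset (Fin n) → ℕ) (hf : IsLOPoly n f)
    (hns : LONoSmallTwoSet f) (X : Finset (Fin n)) (hX : f X ≤ 1)
    (g : Finset (Fin n) → ℕ) (hg : IsLOPureSaturation f g) :
    ((n - 3 ≤ X.card ∨ ∃ Z : Finset (Fin n), Z ⊂ X ∧ f Z = 2) → g X ≠ f X) ∧
    ((∀ g' : Finset (Fin n) → ℕ, IsLOPureSaturation f g' → g' = g) →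
      g X ≠ f X → (n - 3 ≤ X.card ∨ ∃ Z : Finset (Fin n), Z ⊂ X ∧ f Z = 2)) := by
  classical
  obtain ⟨⟨hgpoly, hgsat, hreach⟩, hgpure⟩ := hg
  have hmono := LOSat_mono hreach
  constructor
  · rintro (hlarge | ⟨Z, hZX, hZ2⟩) hEq
    · have hc : Xᶜ.card = n - X.card := by rw [card_compl, Fintype.card_fin]
      have h1 : g Xᶜ ≠ 2 := by
        intro h
        have h4 := hgpure Xᶜ h
        omega
      have h2 : g Xᶜ ≤ 1 := by have := hgpoly.1 Xᶜ; omega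
      have h3 := hgsat.2 Xᶜ h2
      rw [compl_compl] at h3
      omega
    · have hgZ : g Z = 2 := by rcases hmono Z with h | h <;> omega
      have h3 : g X = 2 := hgsat.1 Z X hgZ hZX.subset
      omega
  · intro huniq hne
    by_contra hcon
    push_neg at hcon
    obtain ⟨hsmall, hno2⟩ := hcon
    have hgX : g X = 2 := by rcases hmono X with h | h <;> [exact absurd h hne; exact h.2]
    have hXccard : 4 ≤ Xᶜ.card := by
      rw [card_compl, Fintype.card_fin]; omega
    have hXcne : Xᶜ.Nonempty := Finset.card_pos.mp (by omega)
    set P : Finset (Fin n) → Prop := fun S => (g S = 2 ∧ ¬ S ⊆ X) ∨ Xᶜ ⊆ S with hPdef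
    have hf2P : ∀ S, f S = 2 → P S := by
      intro S hS
      have hgS : g S = 2 := by rcases hmono S with h | h <;> omega
      refine Or.inl ⟨hgS, fun hSX => ?_⟩
      rcases eq_or_ne S X with rfl | hne'
      · omega
      · exact hno2 S (lt_of_le_of_ne hSX hne') hS
    have hnotP_fle : ∀ S, ¬ P S → f S ≤ 1 := by
      intro S hS
      have h1 := hf.1 S
      by_contra hgt
      exact hS (hf2P S (by omega))
    have hPint : ∀ A B, P A → P B → Disjoint A B → False := by
      rintro A B (⟨hA2, hAX⟩ | hA) (⟨hB2, hBX⟩ | hB) d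
      · exact LOPoly_int hgpoly hA2 hB2 d
      · refine hAX (fun a ha => ?_)
        by_contra hax
        exact (Finset.disjoint_left.mp d ha) (hB (Finset.mem_compl.mpr hax))
      · refine hBX (fun a ha => ?_)
        by_contra hax
        exact (Finset.disjoint_left.mp d (hA (Finset.mem_compl.mpr hax))) ha
      · obtain ⟨a, ha⟩ := hXcne
        exact Finset.disjoint_left.mp d (hA ha) (hB ha)
    have hPX : ¬ P X := by
      rintro (⟨_, hns⟩ | hxc)
      · exact hns subset_rfl
      · obtain ⟨a, ha⟩ := hXcne
        exact Finset.mem_compl.mp ha (hxc ha)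
    set g₂ : Finset (Fin n) → ℕ := fun S => if P S then 2 else f S with hg₂def
    have hg₂2 : ∀ S, P S → g₂ S = 2 := fun S hS => by simp only [hg₂def, if_pos hS]
    have hg₂f : ∀ S, ¬ P S → g₂ S = f S := fun S hS => by simp only [hg₂def, if_neg hS]
    have hpoly₂ : IsLOPoly n g₂ := LOPoly_of_spec f hf P hPint hf2P g₂ hg₂2 hg₂f
    have hPup : ∀ S T : Finset (Fin n), P S → S ⊆ T → P T := by
      rintro S T (⟨hg2, hns⟩ | hxc) hST
      · exact Or.inl ⟨hgsat.1 S T hg2 hST, fun hTX => hns (hST.trans hTX)⟩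
      · exact Or.inr (hxc.trans hST)
    have hg₂eq2 : ∀ S, g₂ S = 2 ↔ P S := by
      intro S
      constructor
      · intro h
        by_contra hp
        have := hnotP_fle S hp
        rw [hg₂f S hp] at h
        omega
      · exact hg₂2 S
    have hsat₂ : LOSaturated g₂ := by
      constructor
      · intro S T hS hST
        exact hg₂2 T (hPup S T ((hg₂eq2 S).mp hS) hST)
      · intro S hS
        have hpS : ¬ P S := fun hp => by have := hg₂2 S hp; omega
        refine hg₂2 Sᶜ ?_
        by_cases hSX : S ⊆ X
        · exact Or.inr (fun a ha => Finset.mem_compl.mpr fun haS => Finset.mem_compl.mp ha (hSX haS))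
        · have hgS2 : g S ≠ 2 := fun h => hpS (Or.inl ⟨h, hSX⟩)
          have hgS : g S ≤ 1 := by have := hgpoly.1 S; omega
          have hgSc : g Sᶜ = 2 := hgsat.2 S hgS
          refine Or.inl ⟨hgSc, fun hScX => ?_⟩
          refine hpS (Or.inr fun a ha => ?_)
          by_contra haS
          exact Finset.mem_compl.mp ha (hScX (Finset.mem_compl.mpr haS))
    have hpure₂ : LONoSmallTwoSet g₂ := by
      intro S hS
      rcases (hg₂eq2 S).mp hS with ⟨h2, _⟩ | hxc
      · exact hgpure S h2
      · exact le_trans hXccard (Finset.card_le_card hxc)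
    have key : ∀ V : Finset (Finset (Fin n)), (∀ S ∈ V, P S ∧ f S ≤ 1) →
        Relation.ReflTransGen LORecolourStep f
          (fun S => if S ∈ V ∨ f S = 2 then 2 else f S) := by
      intro V
      induction V using Finset.induction_on with
      | empty =>
        intro _
        have he : (fun S => if S ∈ (∅ : Finset (Finset (Fin n))) ∨ f S = 2 then 2 else f S) = f := by
          funext S
          by_cases h2 : f S = 2
          · rw [if_pos (Or.inr h2), h2]
          · rw [if_neg (by simp [h2])]
        rw [he]
      | @insert a V' ha ih =>
        intro hall
        have hV' : ∀ S ∈ V', P S ∧ f S ≤ 1 := fun S hS => hall S (Finset.mem_insert_of_mem hS)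
        obtain ⟨hPa, hfa⟩ := hall a (Finset.mem_insert_self a V')
        have hfa2 : f a ≠ 2 := by omega
        refine (ih hV').tail ?_
        have hQP : ∀ S, (S ∈ insert a V' ∨ f S = 2) → P S := by
          rintro S (hS | hS)
          · rcases Finset.mem_insert.mp hS with rfl | hS'
            · exact hPa
            · exact (hV' S hS').1
          · exact hf2P S hS
        refine ⟨?_, a, ?_, ?_⟩
        · refine LOPoly_of_spec f hf (fun S => S ∈ insert a V' ∨ f S = 2)
            (fun A B qA qB d => hPint A B (hQP A qA) (hQP B qB) d)
            (fun S h => Or.inr h) _ (fun S hq => if_pos hq) (fun S hq => if_neg hq)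
        · show (if a ∈ V' ∨ f a = 2 then 2 else f a) ≤ 1
          rw [if_neg (by push_neg; exact ⟨ha, hfa2⟩)]
          exact hfa
        · funext S
          show _ = LORecolour _ a 2 S
          unfold LORecolour
          by_cases hSa : S = a
          · subst hSa
            rw [if_pos rfl, if_pos (Or.inl (Finset.mem_insert_self S V'))]
          · rw [if_neg hSa]
            simp only [Finset.mem_insert, hSa, false_or]
    have hreach₂ : Relation.ReflTransGen LORecolourStep f g₂ := by
      have h := key (Finset.univ.filter (fun S => P S ∧ f S ≤ 1))
        (fun S hS => (Finset.mem_filter.mp hS).2)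
      have he : (fun S => if S ∈ Finset.univ.filter (fun S => P S ∧ f S ≤ 1) ∨ f S = 2
          then 2 else f S) = g₂ := by
        funext S
        by_cases hp : P S
        · rw [hg₂2 S hp]
          have h1 := hf.1 S
          by_cases hfs : f S ≤ 1
          · rw [if_pos (Or.inl (Finset.mem_filter.mpr ⟨Finset.mem_univ S, hp, hfs⟩))]
          · rw [if_pos (Or.inr (by omega))]
        · rw [hg₂f S hp, if_neg]
          push_neg
          refine ⟨fun hmem => hp (Finset.mem_filter.mp hmem).2.1, fun h2 => hp (hf2P S h2)⟩
      rwa [he] at h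
    have heq := huniq g₂ ⟨⟨hpoly₂, hsat₂, hreach₂⟩, hpure₂⟩
    have : g₂ X = g X := congrFun heq X
    rw [hg₂f X hPX] at this
    omega
end

section
/- Let f be an n-ary polymorphism of (LO₂, LO₃) with n ≥ 7 and no small 2-set. Suppose f has at least two distinct pure saturations, let g be any pure saturation of f, and let t ∈ [n] be such that g is a recoloured projection with dictating variable t. Then there do not exist disjoint non-empty boolean sets S, T ⊆ [n] of f such that f(S) ≠ [t ∈ S] and f(T) ≠ [t ∈ T], where [t ∈ S] equals 1 if t ∈ S and 0 otherwise. -/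
open Finset

-- ============ auxiliary development ============

/-- `X` is shielded for `g`: every split of its complement contains a 2-set of `g`. -/
def LOShielded {n : ℕ} (g : Finset (Fin n) → ℕ) (X : Finset (Fin n)) : Prop :=
  ∀ Y Z : Finset (Fin n), Disjoint Y Z → Y ∪ Z = Xᶜ → g Y = 2 ∨ g Z = 2

namespace LOAux

variable {n : ℕ}

lemma chain_val {f g : Finset (Fin n) → ℕ}
    (h : Relation.ReflTransGen LORecolourStep f g) :
    ∀ X, g X = f X ∨ g X = 2 := by
  induction h with
  | refl => exact fun X => Or.inl rfl
  | tail _ hstep ih =>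
    obtain ⟨-, X0, -, rfl⟩ := hstep
    intro X
    by_cases hX : X = X0
    · right; simp [LORecolour, hX]
    · rcases ih X with h | h
      · left; simpa [LORecolour, hX]
      · right; simpa [LORecolour, hX]

lemma two_disj {g : Finset (Fin n) → ℕ} (hgp : IsLOPoly n g) {X Y : Finset (Fin n)}
    (hX : g X = 2) (hY : g Y = 2) (hd : Disjoint X Y) : False := by
  have d2 : Disjoint X (X ∪ Y)ᶜ := by
    rw [Finset.disjoint_left]
    intro a ha hb
    exact (Finset.mem_compl.mp hb) (Finset.mem_union_left _ ha)
  have d3 : Disjoint Y (X ∪ Y)ᶜ := by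
    rw [Finset.disjoint_left]
    intro a ha hb
    exact (Finset.mem_compl.mp hb) (Finset.mem_union_right _ ha)
  have hu := hgp.2 X Y (X ∪ Y)ᶜ hd d2 d3 (Finset.union_compl _)
  have := hgp.1 (X ∪ Y)ᶜ
  simp only [HasUniqueMax, hX, hY] at hu
  omega

lemma shielded_empty {g : Finset (Fin n) → ℕ} (hgp : IsLOPoly n g)
    (hsat : LOSaturated g) : LOShielded g (∅ : Finset (Fin n)) := by
  intro Y Z hd hu
  rw [Finset.compl_empty] at hu
  by_cases hY : g Y = 2
  · exact Or.inl hY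
  · right
    have hZ : Z = Yᶜ := by
      ext a
      simp only [Finset.mem_compl]
      constructor
      · intro ha hay
        exact (Finset.disjoint_left.mp hd hay) ha
      · intro ha
        have : a ∈ Y ∪ Z := hu ▸ Finset.mem_univ a
        rcases Finset.mem_union.mp this with h | h
        · exact absurd h ha
        · exact h
    have : g Y ≤ 1 := by have := hgp.1 Y; omega
    rw [hZ]
    exact hsat.2 Y this

lemma shielded_union {g : Finset (Fin n) → ℕ} (hgp : IsLOPoly n g)
    {U₁ U₂ : Finset (Fin n)} (h₁ : LOShielded g U₁) (h₂ : LOShielded g U₂) :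
    LOShielded g (U₁ ∪ U₂) := by
  intro Y Z hd hu
  by_contra hc
  push_neg at hc
  obtain ⟨hY2, hZ2⟩ := hc
  have hYout : ∀ a ∈ Y, a ∉ U₁ ∧ a ∉ U₂ := by
    intro a ha
    have : a ∈ (U₁ ∪ U₂)ᶜ := hu ▸ Finset.mem_union_left _ ha
    simpa [Finset.mem_compl, Finset.mem_union, not_or] using this
  have hZout : ∀ a ∈ Z, a ∉ U₁ ∧ a ∉ U₂ := by
    intro a ha
    have : a ∈ (U₁ ∪ U₂)ᶜ := hu ▸ Finset.mem_union_right _ ha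
    simpa [Finset.mem_compl, Finset.mem_union, not_or] using this
  have hmem : ∀ a : Fin n, a ∉ U₁ → a ∉ U₂ → a ∈ Y ∨ a ∈ Z := by
    intro a h1 h2
    have : a ∈ (U₁ ∪ U₂)ᶜ := by
      simp [Finset.mem_compl, Finset.mem_union, h1, h2]
    rw [← hu] at this
    exact Finset.mem_union.mp this
  have e₁ : (U₂ \ U₁ ∪ Y) ∪ Z = U₁ᶜ := by
    ext a
    simp only [Finset.mem_union, Finset.mem_sdiff, Finset.mem_compl]
    constructor
    · rintro ((⟨h1, h2⟩ | h1) | h1)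
      · exact h2
      · exact (hYout a h1).1
      · exact (hZout a h1).1
    · intro h1
      by_cases h2 : a ∈ U₂
      · exact Or.inl (Or.inl ⟨h2, h1⟩)
      · rcases hmem a h1 h2 with h | h
        · exact Or.inl (Or.inr h)
        · exact Or.inr h
  have d₁ : Disjoint (U₂ \ U₁ ∪ Y) Z := by
    rw [Finset.disjoint_left]
    intro a ha haz
    rcases Finset.mem_union.mp ha with h | h
    · exact (hZout a haz).2 (Finset.mem_sdiff.mp h).1
    · exact Finset.disjoint_left.mp hd h haz
  have hA : g (U₂ \ U₁ ∪ Y) = 2 := ((h₁ _ _ d₁ e₁).resolve_right hZ2)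
  have e₂ : (U₁ \ U₂ ∪ Z) ∪ Y = U₂ᶜ := by
    ext a
    simp only [Finset.mem_union, Finset.mem_sdiff, Finset.mem_compl]
    constructor
    · rintro ((⟨h1, h2⟩ | h1) | h1)
      · exact h2
      · exact (hZout a h1).2
      · exact (hYout a h1).2
    · intro h1
      by_cases h2 : a ∈ U₁
      · exact Or.inl (Or.inl ⟨h2, h1⟩)
      · rcases hmem a h2 h1 with h | h
        · exact Or.inr h
        · exact Or.inl (Or.inr h)
  have d₂ : Disjoint (U₁ \ U₂ ∪ Z) Y := by
    rw [Finset.disjoint_left]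
    intro a ha hay
    rcases Finset.mem_union.mp ha with h | h
    · exact (hYout a hay).1 (Finset.mem_sdiff.mp h).1
    · exact Finset.disjoint_left.mp hd hay h
  have hB : g (U₁ \ U₂ ∪ Z) = 2 := ((h₂ _ _ d₂ e₂).resolve_right hY2)
  refine two_disj hgp hA hB ?_
  rw [Finset.disjoint_left]
  intro a ha hb
  rcases Finset.mem_union.mp ha with h | h
  · rcases Finset.mem_union.mp hb with h' | h'
    · exact (Finset.mem_sdiff.mp h').2 (Finset.mem_sdiff.mp h).1
    · exact (hZout a h').2 (Finset.mem_sdiff.mp h).1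
  · rcases Finset.mem_union.mp hb with h' | h'
    · exact (hYout a h).1 (Finset.mem_sdiff.mp h').1
    · exact Finset.disjoint_left.mp hd h h'

lemma shielded_sdiff {g : Finset (Fin n) → ℕ} (hgp : IsLOPoly n g)
    {U A : Finset (Fin n)} (hU : LOShielded g U) (hA : g A = 2) :
    g (A \ U) = 2 := by
  have hsub : A \ U ⊆ Uᶜ := by
    intro a ha
    exact Finset.mem_compl.mpr (Finset.mem_sdiff.mp ha).2
  have hun : (A \ U) ∪ (Uᶜ \ (A \ U)) = Uᶜ := Finset.union_sdiff_of_subset hsub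
  rcases hU _ _ Finset.disjoint_sdiff hun with h | h
  · exact h
  · exfalso
    refine two_disj hgp hA h ?_
    rw [Finset.disjoint_left]
    intro a ha hb
    have hb' := Finset.mem_sdiff.mp hb
    have : a ∉ U := Finset.mem_compl.mp hb'.1
    exact hb'.2 (Finset.mem_sdiff.mpr ⟨ha, this⟩)

/-- Dictatorship on non-shielded boolean sets. -/
lemma dict_val {g : Finset (Fin n) → ℕ} {t : Fin n} (hgp : IsLOPoly n g)
    (ht : LORecolProj g t) {X : Finset (Fin n)} (hne : X.Nonempty)
    (hX2 : g X ≠ 2) (hsh : ¬ LOShielded g X) :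
    g X = if t ∈ X then 1 else 0 := by
  unfold LOShielded at hsh
  push_neg at hsh
  obtain ⟨Y, Z, hdYZ, hYZu, hY2, hZ2⟩ := hsh
  have hXY : Disjoint X Y := by
    rw [Finset.disjoint_left]
    intro a haX haY
    have : a ∈ Xᶜ := hYZu ▸ Finset.mem_union_left _ haY
    exact (Finset.mem_compl.mp this) haX
  have hXZ : Disjoint X Z := by
    rw [Finset.disjoint_left]
    intro a haX haZ
    have : a ∈ Xᶜ := hYZu ▸ Finset.mem_union_right _ haZ
    exact (Finset.mem_compl.mp this) haX
  have hu : X ∪ Y ∪ Z = Finset.univ := by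
    rw [Finset.union_assoc, hYZu, Finset.union_compl]
  have hum := hgp.2 X Y Z hXY hXZ hdYZ hu
  have bX := hgp.1 X
  have bY := hgp.1 Y
  have bZ := hgp.1 Z
  have hYne : Y ≠ X := by
    intro h
    rw [h] at hXY
    have hbot : X = ⊥ := disjoint_self.mp hXY
    rw [hbot] at hne
    simp [Finset.bot_eq_empty] at hne
  have hZne : Z ≠ X := by
    intro h
    rw [h] at hXZ
    have hbot : X = ⊥ := disjoint_self.mp hXZ
    rw [hbot] at hne
    simp [Finset.bot_eq_empty] at hne
  have hX1 : g X ≤ 1 := by omega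
  apply ht X hX1
  rcases (by omega : g X = 0 ∨ g X = 1) with h0 | h1
  · left
    refine ⟨h0, ?_⟩
    rintro ⟨-, hpoly'⟩
    have hum' := hpoly'.2 X Y Z hXY hXZ hdYZ hu
    simp only [LORecolour, eq_self_iff_true, if_true, if_neg hYne, if_neg hZne] at hum'
    simp only [HasUniqueMax] at hum hum'
    omega
  · right
    refine ⟨h1, ?_⟩
    rintro ⟨-, hpoly'⟩
    have hum' := hpoly'.2 X Y Z hXY hXZ hdYZ hu
    simp only [LORecolour, eq_self_iff_true, if_true, if_neg hYne, if_neg hZne] at hum'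
    simp only [HasUniqueMax] at hum hum'
    omega

/-- Main lemma: if there is a wrongly coloured nonempty boolean set `U` that is not a
2-set of `g`, then every minimal 2-set of `g` is a 2-set of `f`. -/
lemma main_min {f g : Finset (Fin n) → ℕ} {t : Fin n}
    (hf : IsLOPoly n f) (hgp : IsLOPoly n g) (hsat : LOSaturated g)
    (hpure : LONoSmallTwoSet g) (hch : ∀ X, g X = f X ∨ g X = 2)
    (ht : LORecolProj g t)
    {U : Finset (Fin n)} (hUne : U.Nonempty) (hUg : g U ≠ 2)
    (hU1 : f U ≤ 1) (hUw : f U ≠ if t ∈ U then 1 else 0)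
    {M : Finset (Fin n)} (hM : g M = 2) (hmin : ∀ Y, Y ⊂ M → g Y ≠ 2) :
    f M = 2 := by
  classical
  by_contra hMf
  have hMf1 : f M ≤ 1 := by have := hf.1 M; omega
  have fg_eq : ∀ X, g X ≠ 2 → f X = g X := by
    intro X hX
    rcases hch X with h | h
    · exact h.symm
    · exact absurd h hX
  have f2g : ∀ X, f X = 2 → g X = 2 := by
    intro X hX
    rcases hch X with h | h
    · rw [h, hX]
    · exact h
  have hShU : LOShielded g U := by
    by_contra h
    have hd := LOAux.dict_val hgp ht hUne hUg h
    rw [fg_eq U hUg] at hUw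
    exact hUw hd
  set Sg : Finset (Fin n) := (Finset.univ.powerset.filter (fun V => LOShielded g V)).sup id
    with hSgdef
  have hsubS : ∀ V, LOShielded g V → V ⊆ Sg := by
    intro V hV
    exact Finset.le_sup (f := id)
      (Finset.mem_filter.mpr ⟨Finset.mem_powerset.mpr (Finset.subset_univ V), hV⟩)
  have hSsh : LOShielded g Sg := by
    apply Finset.sup_induction
    · rw [Finset.bot_eq_empty]
      exact LOAux.shielded_empty hgp hsat
    · intro a ha b hb
      exact LOAux.shielded_union hgp ha hb
    · intro V hV
      exact (Finset.mem_filter.mp hV).2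
  have hUS : U ⊆ Sg := hsubS U hShU
  have hMcard : 4 ≤ M.card := hpure M hM
  have hMne : M.Nonempty := Finset.card_pos.mp (by omega)
  have hMS : ∀ x ∈ M, x ∉ Sg := by
    have h1 : g (M \ Sg) = 2 := LOAux.shielded_sdiff hgp hSsh hM
    have h2 : M \ Sg = M := by
      by_contra h
      exact hmin _ (Finset.ssubset_iff_subset_ne.mpr ⟨Finset.sdiff_subset, h⟩) h1
    intro x hx hxS
    have : x ∈ M \ Sg := h2.symm ▸ hx
    exact (Finset.mem_sdiff.mp this).2 hxS
  have hUM : Disjoint U M := by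
    rw [Finset.disjoint_left]
    intro a ha ham
    exact hMS a ham (hUS ha)
  set N : Finset (Fin n) := (Sg ∪ M)ᶜ with hNdef
  have hNS : ∀ a ∈ N, a ∉ Sg ∧ a ∉ M := by
    intro a ha
    have := Finset.mem_compl.mp ha
    simp only [Finset.mem_union, not_or] at this
    exact this
  have hNmem : ∀ a : Fin n, a ∉ Sg → a ∉ M → a ∈ N := by
    intro a h1 h2
    rw [hNdef]
    simp [Finset.mem_compl, Finset.mem_union, h1, h2]
  have hN3 : 3 ≤ N.card := by
    obtain ⟨m, hm⟩ := hMne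
    have hsplit : (N ∪ {m}) ∪ (M \ {m}) = Sgᶜ := by
      ext a
      simp only [Finset.mem_union, Finset.mem_sdiff, Finset.mem_singleton, Finset.mem_compl]
      constructor
      · rintro ((h | rfl) | ⟨h1, _⟩)
        · exact (hNS a h).1
        · exact hMS _ hm
        · exact hMS _ h1
      · intro h1
        by_cases h2 : a ∈ M
        · by_cases h3 : a = m
          · exact Or.inl (Or.inr h3)
          · exact Or.inr ⟨h2, h3⟩
        · exact Or.inl (Or.inl (hNmem a h1 h2))
    have hdisj : Disjoint (N ∪ {m}) (M \ {m}) := by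
      rw [Finset.disjoint_left]
      intro a ha hb
      have hb' := Finset.mem_sdiff.mp hb
      rcases Finset.mem_union.mp ha with h | h
      · exact (hNS a h).2 hb'.1
      · exact hb'.2 h
    rcases hSsh _ _ hdisj hsplit with h | h
    · have h4 := hpure _ h
      have h5 := Finset.card_union_le N ({m} : Finset (Fin n))
      simp only [Finset.card_singleton] at h5
      omega
    · exact absurd h
        (hmin _ (Finset.sdiff_ssubset (by simpa using hm) (Finset.singleton_nonempty m)))
  have hNne : N.Nonempty := Finset.card_pos.mp (by omega)
  have dictf : ∀ X : Finset (Fin n), X.Nonempty → g X ≠ 2 → ¬ LOShielded g X →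
      f X = if t ∈ X then 1 else 0 := by
    intro X h1 h2 h3
    rw [fg_eq X h2]
    exact LOAux.dict_val hgp ht h1 h2 h3
  have hsubMval : ∀ Y, Y ⊂ M → Y.Nonempty → f Y = if t ∈ Y then 1 else 0 := by
    intro Y hY hYne
    refine dictf Y hYne (hmin Y hY) ?_
    intro hsh
    obtain ⟨a, ha⟩ := hYne
    exact hMS a (hY.subset ha) (hsubS Y hsh ha)
  have hMc2 : g Mᶜ ≠ 2 := fun h => LOAux.two_disj hgp hM h disjoint_compl_right
  have hMc1 : f Mᶜ ≤ 1 := by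
    by_cases h : f Mᶜ = 2
    · exact absurd (f2g _ h) hMc2
    · have := hf.1 Mᶜ; omega
  have hfe : f (∅ : Finset (Fin n)) ≤ 1 := by
    by_cases h : f (∅ : Finset (Fin n)) = 2
    · have := hpure _ (f2g _ h)
      simp at this
    · have := hf.1 (∅ : Finset (Fin n)); omega
  have humM : HasUniqueMax (f M) (f Mᶜ) (f ∅) := by
    refine hf.2 M Mᶜ ∅ disjoint_compl_right (Finset.disjoint_empty_right _)
      (Finset.disjoint_empty_right _) ?_
    rw [Finset.union_empty, Finset.union_compl]
  by_cases htM : t ∈ M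
  · -- case t ∈ M
    have htS : t ∉ Sg := hMS t htM
    have h1t : f {t} = 1 := by
      have := dictf {t} (Finset.singleton_nonempty t)
        (fun h => by have := hpure _ h; simp at this)
        (fun hsh => htS (hsubS _ hsh (Finset.mem_singleton_self t)))
      simpa using this
    have hMt : ({t} : Finset (Fin n)) ⊆ M := Finset.singleton_subset_iff.mpr htM
    have hMtne : (M \ {t}).Nonempty := by
      apply Finset.card_pos.mp
      rw [Finset.card_sdiff_of_subset hMt]
      simp only [Finset.card_singleton]
      omega
    have h2t : f (M \ {t}) = 0 := by
      have := hsubMval (M \ {t})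
        (Finset.sdiff_ssubset hMt (Finset.singleton_nonempty t)) hMtne
      simpa using this
    have humA : HasUniqueMax (f {t}) (f (M \ {t})) (f Mᶜ) := by
      refine hf.2 _ _ _ ?_ ?_ ?_ ?_
      · rw [Finset.disjoint_left]
        intro a ha hb
        exact (Finset.mem_sdiff.mp hb).2 ha
      · rw [Finset.disjoint_left]
        intro a ha hb
        exact (Finset.mem_compl.mp hb) (hMt ha)
      · rw [Finset.disjoint_left]
        intro a ha hb
        exact (Finset.mem_compl.mp hb) (Finset.mem_sdiff.mp ha).1
      · rw [Finset.union_sdiff_of_subset hMt, Finset.union_compl]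
    have hMcv : f Mᶜ = 0 := by
      simp only [HasUniqueMax, h1t, h2t] at humA
      omega
    have hfM01 : f M = 1 ∨ f M = 0 := by
      simp only [HasUniqueMax, hMcv] at humM
      omega
    rcases hfM01 with hfM | hfM
    · -- (α) f M = 1
      have hUMc : U ⊆ Mᶜ := fun a ha =>
        Finset.mem_compl.mpr (Finset.disjoint_left.mp hUM ha)
      have hd2 : Disjoint M (Mᶜ \ U) := by
        rw [Finset.disjoint_left]
        intro a ha hb
        exact (Finset.mem_compl.mp (Finset.mem_sdiff.mp hb).1) ha
      have hval : f (Mᶜ \ U) ≤ 1 := by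
        by_cases h : f (Mᶜ \ U) = 2
        · exact (LOAux.two_disj hgp hM (f2g _ h) hd2).elim
        · have := hf.1 (Mᶜ \ U); omega
      have hum2 : HasUniqueMax (f M) (f U) (f (Mᶜ \ U)) := by
        refine hf.2 _ _ _ hUM.symm hd2 Finset.disjoint_sdiff ?_
        rw [Finset.union_assoc, Finset.union_sdiff_of_subset hUMc, Finset.union_compl]
      have hfU0 : f U = 0 := by
        simp only [HasUniqueMax, hfM] at hum2
        omega
      by_cases htU : t ∈ U
      · exact (hMS t htM) (hUS htU)
      · rw [if_neg htU] at hUw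
        exact hUw hfU0
    · -- (β) f M = 0
      obtain ⟨v, hv, w, hw, hvw⟩ := Finset.one_lt_card.mp (by omega : 1 < N.card)
      have hv' := hNS v hv
      have hw' := hNS w hw
      have hP1g : g (Sg ∪ {v}) ≠ 2 := by
        intro h
        have h2 := LOAux.shielded_sdiff hgp hSsh h
        have he : (Sg ∪ {v}) \ Sg = {v} := by
          ext a
          simp only [Finset.mem_sdiff, Finset.mem_union, Finset.mem_singleton]
          constructor
          · rintro ⟨h1 | h1, h2⟩
            · exact absurd h1 h2
            · exact h1
          · rintro rfl
            exact ⟨Or.inr rfl, hv'.1⟩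
        rw [he] at h2
        have := hpure _ h2
        simp at this
      have hP1f : f (Sg ∪ {v}) = 0 := by
        have hx := dictf (Sg ∪ {v}) ⟨v, by simp⟩ hP1g
          (fun hsh => hv'.1 (hsubS _ hsh (by simp)))
        have htP : t ∉ Sg ∪ {v} := by
          simp only [Finset.mem_union, Finset.mem_singleton]
          rintro (h | rfl)
          · exact htS h
          · exact hv'.2 htM
        rw [if_neg htP] at hx
        exact hx
      have hP2ne : (N \ {v}).Nonempty := ⟨w, Finset.mem_sdiff.mpr ⟨hw, by simpa using hvw.symm⟩⟩
      have hP2dM : Disjoint (N \ {v}) M := by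
        rw [Finset.disjoint_left]
        intro a ha hb
        exact (hNS a (Finset.mem_sdiff.mp ha).1).2 hb
      have hP2g : g (N \ {v}) ≠ 2 := fun h => LOAux.two_disj hgp h hM hP2dM
      have hP2f : f (N \ {v}) = 0 := by
        have hx := dictf (N \ {v}) hP2ne hP2g
          (fun hsh => (hNS w hw).1 (hsubS _ hsh (Finset.mem_sdiff.mpr ⟨hw, by simpa using hvw.symm⟩)))
        have htP : t ∉ N \ {v} := fun h => (hNS t (Finset.mem_sdiff.mp h).1).2 htM
        rw [if_neg htP] at hx
        exact hx
      have hum3 : HasUniqueMax (f M) (f (Sg ∪ {v})) (f (N \ {v})) := by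
        refine hf.2 _ _ _ ?_ ?_ ?_ ?_
        · rw [Finset.disjoint_left]
          intro a ha hb
          rcases Finset.mem_union.mp hb with h | h
          · exact hMS a ha h
          · exact hv'.2 ((Finset.mem_singleton.mp h) ▸ ha)
        · exact hP2dM.symm
        · rw [Finset.disjoint_left]
          intro a ha hb
          have hb' := Finset.mem_sdiff.mp hb
          rcases Finset.mem_union.mp ha with h | h
          · exact (hNS a hb'.1).1 h
          · exact hb'.2 h
        · apply Finset.eq_univ_of_forall
          intro a
          simp only [Finset.mem_union, Finset.mem_sdiff, Finset.mem_singleton]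
          by_cases h1 : a ∈ M
          · exact Or.inl (Or.inl h1)
          · by_cases h2 : a ∈ Sg
            · exact Or.inl (Or.inr (Or.inl h2))
            · have hN1 := hNmem a h2 h1
              by_cases h3 : a = v
              · exact Or.inl (Or.inr (Or.inr h3))
              · exact Or.inr ⟨hN1, h3⟩
      simp only [HasUniqueMax, hfM, hP1f, hP2f] at hum3
      omega
  · -- case t ∉ M
    obtain ⟨m, hm⟩ := hMne
    have hmt : t ≠ m := fun h => htM (h ▸ hm)
    have h1m : f {m} = 0 := by
      have hx := dictf {m} (Finset.singleton_nonempty m)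
        (fun h => by have := hpure _ h; simp at this)
        (fun hsh => hMS m hm (hsubS _ hsh (Finset.mem_singleton_self m)))
      rw [if_neg (by simpa using hmt)] at hx
      exact hx
    have hMm : ({m} : Finset (Fin n)) ⊆ M := Finset.singleton_subset_iff.mpr hm
    have hMmne : (M \ {m}).Nonempty := by
      apply Finset.card_pos.mp
      rw [Finset.card_sdiff_of_subset hMm]
      simp only [Finset.card_singleton]
      omega
    have h2m : f (M \ {m}) = 0 := by
      have hx := hsubMval (M \ {m})
        (Finset.sdiff_ssubset hMm (Finset.singleton_nonempty m)) hMmne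
      rw [if_neg (fun h => htM (Finset.mem_sdiff.mp h).1)] at hx
      exact hx
    have humB : HasUniqueMax (f {m}) (f (M \ {m})) (f Mᶜ) := by
      refine hf.2 _ _ _ ?_ ?_ ?_ ?_
      · rw [Finset.disjoint_left]
        intro a ha hb
        exact (Finset.mem_sdiff.mp hb).2 ha
      · rw [Finset.disjoint_left]
        intro a ha hb
        exact (Finset.mem_compl.mp hb) (hMm ha)
      · rw [Finset.disjoint_left]
        intro a ha hb
        exact (Finset.mem_compl.mp hb) (Finset.mem_sdiff.mp ha).1
      · rw [Finset.union_sdiff_of_subset hMm, Finset.union_compl]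
    have hMcv : f Mᶜ = 1 := by
      simp only [HasUniqueMax, h1m, h2m] at humB
      omega
    have hfM0 : f M = 0 := by
      simp only [HasUniqueMax, hMcv] at humM
      omega
    set R : Finset (Fin n) := (U ∪ M)ᶜ with hRdef
    have hNR : N ⊆ R := by
      intro a ha
      have h' := hNS a ha
      rw [hRdef]
      simp only [Finset.mem_compl, Finset.mem_union, not_or]
      exact ⟨fun h => h'.1 (hUS h), h'.2⟩
    have hRmem : ∀ a : Fin n, a ∈ R ↔ (a ∉ U ∧ a ∉ M) := by
      intro a
      rw [hRdef]
      simp only [Finset.mem_compl, Finset.mem_union, not_or]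
    have hRg : g R ≠ 2 := by
      intro h
      have h2 := LOAux.shielded_sdiff hgp hSsh h
      have he : R \ Sg = N := by
        ext a
        constructor
        · intro hx
          have hx' := Finset.mem_sdiff.mp hx
          exact hNmem a hx'.2 ((hRmem a).mp hx'.1).2
        · intro hx
          have h' := hNS a hx
          exact Finset.mem_sdiff.mpr
            ⟨(hRmem a).mpr ⟨fun hU => h'.1 (hUS hU), h'.2⟩, h'.1⟩
      rw [he] at h2
      refine LOAux.two_disj hgp h2 hM ?_
      rw [Finset.disjoint_left]
      intro a ha hb
      exact (hNS a ha).2 hb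
    have hRne : R.Nonempty := hNne.mono hNR
    have hRf : f R = if t ∈ R then 1 else 0 := by
      refine dictf R hRne hRg ?_
      intro hsh
      obtain ⟨a, ha⟩ := hNne
      exact (hNS a ha).1 (hsubS _ hsh (hNR ha))
    have htR : t ∈ R ↔ t ∉ U := by
      rw [hRmem t]
      constructor
      · exact fun h => h.1
      · exact fun h => ⟨h, htM⟩
    have humC : HasUniqueMax (f U) (f M) (f R) := by
      refine hf.2 _ _ _ hUM ?_ ?_ ?_
      · rw [Finset.disjoint_left]
        intro a ha hb
        exact ((hRmem a).mp hb).1 ha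
      · rw [Finset.disjoint_left]
        intro a ha hb
        exact ((hRmem a).mp hb).2 ha
      · rw [hRdef, Finset.union_compl]
    by_cases htU : t ∈ U
    · have hfU : f U = 0 := by
        rw [if_pos htU] at hUw
        omega
      have hfR : f R = 0 := by
        rw [hRf, if_neg (fun h => (htR.mp h) htU)]
      simp only [HasUniqueMax, hfU, hfM0, hfR] at humC
      omega
    · have hfU : f U = 1 := by
        rw [if_neg htU] at hUw
        omega
      have hfR : f R = 1 := by
        rw [hRf, if_pos (htR.mpr htU)]
      simp only [HasUniqueMax, hfU, hfM0, hfR] at humC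
      omega

end LOAux

/-- If `f` (arity ≥ 7, no small 2-set) does not have a unique pure saturation, and `t` is
the dictating variable of any pure saturation of `f`, then `f` has no disjoint non-empty
boolean sets `S`, `T` with `f S ≠ [t ∈ S]` and `f T ≠ [t ∈ T]`. -/
theorem stmt9 (n : ℕ) (hn : 7 ≤ n) (f : Finset (Fin n) → ℕ) (hf : IsLOPoly n f)
    (hns : LONoSmallTwoSet f)
    (hnonuniq : ∃ g₁ g₂ : Finset (Fin n) → ℕ,
      IsLOPureSaturation f g₁ ∧ IsLOPureSaturation f g₂ ∧ g₁ ≠ g₂)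
    (g : Finset (Fin n) → ℕ) (hg : IsLOPureSaturation f g)
    (t : Fin n) (ht : LORecolProj g t) :
    ¬ ∃ S T : Finset (Fin n), Disjoint S T ∧ S.Nonempty ∧ T.Nonempty ∧
      f S ≤ 1 ∧ f T ≤ 1 ∧
      f S ≠ (if t ∈ S then 1 else 0) ∧ f T ≠ (if t ∈ T then 1 else 0) := by
  rintro ⟨S, T, hST, hSne, hTne, hfS1, hfT1, hwS, hwT⟩
  obtain ⟨g₁, g₂, h₁, h₂, hne⟩ := hnonuniq
  obtain ⟨⟨hgpoly, hgsat, hgchainRT⟩, hgpure⟩ := hg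
  have hch := LOAux.chain_val hgchainRT
  have key : ∀ U : Finset (Fin n), U.Nonempty → g U ≠ 2 → f U ≤ 1 →
      f U ≠ (if t ∈ U then 1 else 0) → False := by
    intro U hUne hUg hU1 hUw
    have cover : ∀ A : Finset (Fin n), g A = 2 → ∃ B, B ⊆ A ∧ f B = 2 := by
      intro A
      induction A using Finset.strongInductionOn with
      | _ A ih =>
        intro hA
        by_cases hex : ∃ C, C ⊂ A ∧ g C = 2
        · obtain ⟨C, hC, hC2⟩ := hex
          obtain ⟨B, hBC, hB⟩ := ih C hC hC2
          exact ⟨B, hBC.trans hC.subset, hB⟩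
        · push_neg at hex
          exact ⟨A, subset_rfl,
            LOAux.main_min hf hgpoly hgsat hgpure hch ht hUne hUg hU1 hUw hA hex⟩
    have sat_eq : ∀ h : Finset (Fin n) → ℕ, IsLOPureSaturation f h → h = g := by
      intro h hh
      obtain ⟨⟨hhp, hhsat, hhRT⟩, hhpure⟩ := hh
      have hch' := LOAux.chain_val hhRT
      funext X
      by_cases hx : g X = 2
      · obtain ⟨B, hBX, hfB⟩ := cover X hx
        have hB2 : h B = 2 := by
          rcases hch' B with e | e
          · rw [e, hfB]
          · exact e
        rw [hhsat.1 B X hB2 hBX, hx]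
      · have h1 : g X = f X := (hch X).resolve_right hx
        have hXc : g Xᶜ = 2 := hgsat.2 X (by have := hgpoly.1 X; omega)
        obtain ⟨B, hBXc, hfB⟩ := cover Xᶜ hXc
        have hB2 : h B = 2 := by
          rcases hch' B with e | e
          · rw [e, hfB]
          · exact e
        have hx' : h X ≠ 2 := by
          intro hh2
          refine LOAux.two_disj hhp hh2 hB2 ?_
          rw [Finset.disjoint_left]
          intro a ha hb
          exact (Finset.mem_compl.mp (hBXc hb)) ha
        rw [(hch' X).resolve_right hx', ← h1]
    exact hne ((sat_eq g₁ h₁).trans (sat_eq g₂ h₂).symm)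
  by_cases hgS : g S = 2
  · have hgT : g T ≠ 2 := fun h => LOAux.two_disj hgpoly hgS h hST
    exact key T hTne hgT hfT1 hwT
  · exact key S hSne hgS hfS1 hwS
end

section
/- Let f be an n-ary polymorphism of (LO₂, LO₃) with n ≥ 7 and no small 2-set, and suppose f has a unique pure saturation g. Let t ∈ [n] be such that g is a recoloured projection with dictating variable t, and let X ⊆ [n] be any set with t ∈ X and f(X) = 1. Then X ∩ Y ≠ ∅ for every set Y ⊆ [n] such that f(Y) = 1 and Y ∩ T_g ≠ ∅. -/
open Finset

/-- If `f` (arity ≥ 7, no small 2-set) has a unique pure saturation `g` with dictating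
variable `t`, and `X` is a 1-set of `f` with `t ∈ X`, then `X` meets every 1-set of `f`
that meets `T_g`. -/
theorem stmt10 (n : ℕ) (hn : 7 ≤ n) (f : Finset (Fin n) → ℕ) (hf : IsLOPoly n f)
    (hns : LONoSmallTwoSet f) (g : Finset (Fin n) → ℕ) (hg : IsLOPureSaturation f g)
    (huniq : ∀ g' : Finset (Fin n) → ℕ, IsLOPureSaturation f g' → g' = g)
    (t : Fin n) (ht : LORecolProj g t)
    (X : Finset (Fin n)) (htX : t ∈ X) (hX : f X = 1) :
    ∀ Y : Finset (Fin n), f Y = 1 → (↑Y ∩ LOTSet g : Set (Fin n)).Nonempty →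
      (X ∩ Y).Nonempty := by
  intro Y hY hYT
  by_contra hcon
  rw [Finset.not_nonempty_iff_eq_empty] at hcon
  have hdisj : Disjoint X Y := Finset.disjoint_iff_inter_eq_empty.2 hcon
  have htY : t ∉ Y := by
    intro h
    have : t ∈ X ∩ Y := Finset.mem_inter.2 ⟨htX, h⟩
    simp [hcon] at this
  obtain ⟨⟨hgpoly, hgsat, hchain⟩, hgns⟩ := hg
  -- values of g are values of f or 2
  have hfg : ∀ S, g S = f S ∨ g S = 2 := by
    have key : ∀ h, Relation.ReflTransGen LORecolourStep f h →
        ∀ S, h S = f S ∨ h S = 2 := by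
      intro h hh
      induction hh with
      | refl => exact fun S => Or.inl rfl
      | tail _ hbc ih =>
        obtain ⟨_, W, _, rfl⟩ := hbc
        intro S
        by_cases hS : S = W
        · exact Or.inr (by simp [LORecolour, hS])
        · simpa [LORecolour, hS] using ih S
    exact key g hchain
  set Z := (X ∪ Y)ᶜ with hZdef
  have hdXZ : Disjoint X Z := by
    simp only [hZdef]
    exact (disjoint_compl_right).mono_left Finset.subset_union_left
  have hdYZ : Disjoint Y Z := by
    simp only [hZdef]
    exact (disjoint_compl_right).mono_left Finset.subset_union_right
  have hUnion : X ∪ Y ∪ Z = Finset.univ := by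
    rw [hZdef, Finset.union_compl]
  have hfZ : f Z = 2 := by
    have hum := hf.2 X Y Z hdisj hdXZ hdYZ hUnion
    have hle := hf.1 Z
    rw [hX, hY] at hum
    rcases hum with ⟨h1, h2⟩ | ⟨h1, h2⟩ | ⟨h1, h2⟩ <;> omega
  have hgZ : g Z = 2 := by
    rcases hfg Z with h | h
    · rw [h, hfZ]
    · exact h
  have hgY : g Y = 1 := by
    have hum := hgpoly.2 X Y Z hdisj hdXZ hdYZ hUnion
    have h2 := hgpoly.1 X
    have h2' := hgpoly.1 Y
    rw [hgZ] at hum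
    have hlt : g Y < 2 := by
      rcases hum with ⟨h1, h3⟩ | ⟨h1, h3⟩ | ⟨h1, h3⟩ <;> omega
    rcases hfg Y with h | h <;> omega
  -- a minimal 2-set M of g meeting Y
  obtain ⟨a, ha⟩ := hYT
  obtain ⟨haY, M, hM, haM⟩ := ha
  rw [Finset.mem_coe] at haY
  -- the two auxiliary sets
  set P := M \ Y with hPdef
  set W := (M ∪ Y)ᶜ with hWdef
  have hYne : Y ≠ ∅ := Finset.ne_empty_of_mem haY
  have hdMP : Disjoint M (Y \ M) := Finset.disjoint_sdiff
  have hdMW : Disjoint M W := by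
    simp only [hWdef]
    exact (disjoint_compl_right).mono_left Finset.subset_union_left
  have hdYW : Disjoint Y W := by
    simp only [hWdef]
    exact (disjoint_compl_right).mono_left Finset.subset_union_right
  have hdYMW : Disjoint (Y \ M) W := hdYW.mono_left (Finset.sdiff_subset)
  have hdYP : Disjoint Y P := by
    simp only [hPdef]
    exact (Finset.sdiff_disjoint).symm
  have hdPW : Disjoint P W := hdMW.mono_left (Finset.sdiff_subset)
  have hU1 : M ∪ (Y \ M) ∪ W = Finset.univ := by
    simp only [hWdef]
    rw [Finset.union_sdiff_self_eq_union]
    exact Finset.union_compl _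
  have hU2 : Y ∪ P ∪ W = Finset.univ := by
    simp only [hPdef, hWdef]
    rw [Finset.union_comm Y (M \ Y), Finset.sdiff_union_self_eq_union,
      Finset.union_compl]
  -- g W ≤ 1
  have hgW : g W ≤ 1 := by
    have hum := hgpoly.2 M (Y \ M) W hdMP hdMW hdYMW hU1
    rw [hM.1] at hum
    have h1 := hgpoly.1 (Y \ M)
    have h2 := hgpoly.1 W
    rcases hum with ⟨h3, h4⟩ | ⟨h3, h4⟩ | ⟨h3, h4⟩ <;> omega
  -- g P ≤ 1
  have hgP : g P ≤ 1 := by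
    have hsub : P ⊂ M := by
      refine Finset.ssubset_iff_of_subset Finset.sdiff_subset |>.2 ⟨a, haM, ?_⟩
      simp [hPdef, haY]
    have := hM.2 P hsub
    have h2 := hgpoly.1 P
    omega
  -- force g P = 0 and g W = 0
  have hPW0 : g P = 0 ∧ g W = 0 := by
    have hum := hgpoly.2 Y P W hdYP hdYW hdPW hU2
    rw [hgY] at hum
    rcases hum with ⟨h3, h4⟩ | ⟨h3, h4⟩ | ⟨h3, h4⟩ <;> omega
  -- Y is static for g
  have hPneY : P ≠ Y := by
    intro h
    exact (Finset.notMem_sdiff_of_mem_right haY) (h ▸ haY)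
  have hWneY : W ≠ Y := by
    intro h
    have : a ∈ W := h ▸ haY
    simp only [hWdef, Finset.mem_compl, Finset.mem_union] at this
    exact this (Or.inl haM)
  have hstatic : LOStatic g Y := by
    refine Or.inr ⟨hgY, fun hrec => ?_⟩
    obtain ⟨-, hpoly'⟩ := hrec
    have hum := hpoly'.2 Y P W hdYP hdYW hdPW hU2
    have e1 : LORecolour g Y 0 Y = 0 := by simp [LORecolour]
    have e2 : LORecolour g Y 0 P = 0 := by
      simp [LORecolour, hPneY, hPW0.1]
    have e3 : LORecolour g Y 0 W = 0 := by
      simp [LORecolour, hWneY, hPW0.2]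
    rw [e1, e2, e3] at hum
    rcases hum with ⟨h3, h4⟩ | ⟨h3, h4⟩ | ⟨h3, h4⟩ <;> omega
  have := ht Y (by omega) hstatic
  rw [if_neg htY] at this
  omega
end

section
/- Let f be an n-ary polymorphism of (LO₂, LO₃) with n ≥ 7 and no small 2-set, having a unique pure saturation g. Let π : [n] → [m] be a map with m ≥ 7 such that the minor f' = f^π is an m-ary polymorphism with no small 2-set, and suppose f' has a unique pure saturation g' such that g' has no minimal 2-set with m − 3 or more elements. If t and t' are the dictating variables of g and g' respectively (i.e. g is a recoloured projection with dictating variable t and g' is a recoloured projection with dictating variable t'), then π(t) = t'. -/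
open Finset

section LOAux

open Finset Relation

variable {n m k : ℕ}

def Pre (π : Fin n → Fin m) (X : Finset (Fin m)) : Finset (Fin n) :=
  Finset.univ.filter (fun a => π a ∈ X)

lemma mem_Pre {π : Fin n → Fin m} {X : Finset (Fin m)} {a : Fin n} :
    a ∈ Pre π X ↔ π a ∈ X := by simp [Pre]

lemma LOMinor_eq (f : Finset (Fin n) → ℕ) (π : Fin n → Fin m) (X : Finset (Fin m)) :
    LOMinor f π X = f (Pre π X) := rfl

lemma Pre_mono {π : Fin n → Fin m} {X Y : Finset (Fin m)} (h : X ⊆ Y) :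
    Pre π X ⊆ Pre π Y := fun a ha => mem_Pre.2 (h (mem_Pre.1 ha))

lemma Pre_compl {π : Fin n → Fin m} (X : Finset (Fin m)) :
    Pre π Xᶜ = (Pre π X)ᶜ := by ext a; simp [Pre]

lemma Pre_disj {π : Fin n → Fin m} {X Y : Finset (Fin m)} (h : Disjoint X Y) :
    Disjoint (Pre π X) (Pre π Y) := by
  rw [Finset.disjoint_left] at h ⊢
  intro a haX haY
  exact h (mem_Pre.1 haX) (mem_Pre.1 haY)

lemma Pre_cover {π : Fin n → Fin m} {X Y Z : Finset (Fin m)}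
    (h : X ∪ Y ∪ Z = Finset.univ) :
    Pre π X ∪ Pre π Y ∪ Pre π Z = Finset.univ := by
  apply Finset.eq_univ_of_forall
  intro a
  have := Finset.eq_univ_iff_forall.1 h (π a)
  simp only [Finset.mem_union, mem_Pre] at this ⊢
  exact this

lemma minor_poly {f : Finset (Fin n) → ℕ} (hf : IsLOPoly n f) (π : Fin n → Fin m) :
    IsLOPoly m (LOMinor f π) := by
  refine ⟨fun X => hf.1 _, fun X Y Z hXY hXZ hYZ hU => ?_⟩
  exact hf.2 _ _ _ (Pre_disj hXY) (Pre_disj hXZ) (Pre_disj hYZ) (Pre_cover hU)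

lemma no_disjoint_two {q : Finset (Fin k) → ℕ} (hq : IsLOPoly k q)
    {A B : Finset (Fin k)} (hA : q A = 2) (hB : q B = 2) (hAB : Disjoint A B) : False := by
  have hb := hq.1 (A ∪ B)ᶜ
  have h := hq.2 A B (A ∪ B)ᶜ hAB
    (disjoint_compl_right.mono_left Finset.subset_union_left)
    (disjoint_compl_right.mono_left Finset.subset_union_right)
    (by rw [Finset.union_compl])
  rw [hA, hB] at h
  rcases h with ⟨h1, _⟩ | ⟨h1, _⟩ | ⟨h1, h2⟩ <;> omega

lemma two_compl {q : Finset (Fin k) → ℕ} (hq : IsLOPoly k q)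
    {A : Finset (Fin k)} (hA : q A = 2) : q Aᶜ ≤ 1 := by
  have hb := hq.1 Aᶜ
  rcases Nat.lt_or_ge (q Aᶜ) 2 with h | h
  · omega
  · exact absurd (no_disjoint_two hq hA (by omega) disjoint_compl_right) (fun h => h)

lemma bool_subset {q : Finset (Fin k) → ℕ} (hq : IsLOPoly k q) (hup : LOUpwardsClosed q)
    {A W : Finset (Fin k)} (hW : q W ≤ 1) (hAW : A ⊆ W) : q A ≤ 1 := by
  have hb := hq.1 A
  rcases Nat.lt_or_ge (q A) 2 with h | h
  · omega
  · have := hup A W (by omega) hAW; omega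

end LOAux
section LOAux2

open Finset Relation

variable {n m k : ℕ}

lemma LORecolour_same (q : Finset (Fin k) → ℕ) (X : Finset (Fin k)) (i : ℕ) :
    LORecolour q X i X = i := if_pos rfl

lemma LORecolour_ne (q : Finset (Fin k) → ℕ) {X Y : Finset (Fin k)} (i : ℕ) (h : Y ≠ X) :
    LORecolour q X i Y = q Y := if_neg h

lemma recolour_poly {q : Finset (Fin k) → ℕ} (hq : IsLOPoly k q) {B : Finset (Fin k)}
    (hBne : B ≠ ∅) (hsub : ∀ A ⊆ Bᶜ, q A ≤ 1) :
    IsLOPoly k (LORecolour q B 2) := by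
  have hvals : ∀ X Y Z : Finset (Fin k), Disjoint X Y → Disjoint X Z → Disjoint Y Z →
      X ∪ Y ∪ Z = Finset.univ → X = B →
      LORecolour q B 2 X = 2 ∧ LORecolour q B 2 Y ≤ 1 ∧ LORecolour q B 2 Z ≤ 1 := by
    intro X Y Z hXY hXZ hYZ hU hXB
    subst hXB
    have hYB : Y ≠ X := by
      intro h; subst h
      exact hBne (by simpa using disjoint_self.1 hXY)
    have hZB : Z ≠ X := by
      intro h; subst h
      exact hBne (by simpa using disjoint_self.1 hXZ)
    have hYsub : Y ⊆ Xᶜ := by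
      intro a ha
      simp only [Finset.mem_compl]
      exact fun haX => (Finset.disjoint_left.1 hXY) haX ha
    have hZsub : Z ⊆ Xᶜ := by
      intro a ha
      simp only [Finset.mem_compl]
      exact fun haX => (Finset.disjoint_left.1 hXZ) haX ha
    refine ⟨LORecolour_same q X 2, ?_, ?_⟩
    · rw [LORecolour_ne q 2 hYB]; exact hsub Y hYsub
    · rw [LORecolour_ne q 2 hZB]; exact hsub Z hZsub
  constructor
  · intro X
    rw [LORecolour]
    split
    · exact le_refl 2
    · exact hq.1 X
  · intro X Y Z hXY hXZ hYZ hU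
    by_cases hX : X = B
    · obtain ⟨h1, h2, h3⟩ := hvals X Y Z hXY hXZ hYZ hU hX
      left; omega
    by_cases hY : Y = B
    · obtain ⟨h1, h2, h3⟩ := hvals Y X Z hXY.symm hYZ hXZ
        (by rw [← hU]; ext a; simp [Finset.mem_union]; tauto) hY
      right; left; omega
    by_cases hZ : Z = B
    · obtain ⟨h1, h2, h3⟩ := hvals Z X Y hXZ.symm hYZ.symm hXY
        (by rw [← hU]; ext a; simp [Finset.mem_union]; tauto) hZ
      right; right; omega
    · rw [LORecolour_ne q 2 hX, LORecolour_ne q 2 hY, LORecolour_ne q 2 hZ]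
      exact hq.2 X Y Z hXY hXZ hYZ hU

lemma static_of_bool_partition {q : Finset (Fin k) → ℕ} (hq : IsLOPoly k q)
    {S Y Z : Finset (Fin k)}
    (hSY : Disjoint S Y) (hSZ : Disjoint S Z) (hYZ : Disjoint Y Z)
    (hU : S ∪ Y ∪ Z = Finset.univ)
    (hS : q S ≤ 1) (hY : q Y ≤ 1) (hZ : q Z ≤ 1)
    (hne1 : Y ≠ S) (hne2 : Z ≠ S) :
    LOStatic q S := by
  have hum := hq.2 S Y Z hSY hSZ hYZ hU
  have key : ∀ b : ℕ, b ≤ 1 → b ≠ q S → ¬ IsLOPoly k (LORecolour q S b) := by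
    intro b hb hbne hpoly
    have hum' := hpoly.2 S Y Z hSY hSZ hYZ hU
    rw [LORecolour_same, LORecolour_ne q b hne1, LORecolour_ne q b hne2] at hum'
    rcases hum with ⟨h1, h2⟩ | ⟨h1, h2⟩ | ⟨h1, h2⟩ <;>
      rcases hum' with ⟨h1', h2'⟩ | ⟨h1', h2'⟩ | ⟨h1', h2'⟩ <;> omega
  rcases Nat.lt_or_ge (q S) 1 with h | h
  · left
    refine ⟨by omega, fun hrec => key 1 (le_refl 1) hrec.1 hrec.2⟩
  · right
    refine ⟨by omega, fun hrec => key 0 (by omega) hrec.1 hrec.2⟩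

lemma exists_min_two {q : Finset (Fin k) → ℕ} {X : Finset (Fin k)} (hX : q X = 2) :
    ∃ M, M ⊆ X ∧ LOMinTwoSet q M := by
  induction X using Finset.strongInductionOn with
  | _ X ih =>
    by_cases h : ∃ Y, Y ⊂ X ∧ q Y = 2
    · obtain ⟨Y, hYX, hY2⟩ := h
      obtain ⟨M, hMY, hM⟩ := ih Y hYX hY2
      exact ⟨M, hMY.trans hYX.subset, hM⟩
    · push_neg at h
      exact ⟨X, Finset.Subset.refl X, hX, fun Y hY => h Y hY⟩

end LOAux2
section LOAux3

open Finset Relation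

variable {n m k : ℕ}

lemma sat_avoid (hk : 7 ≤ k) (D : Finset (Fin k) → Prop)
    (Ddown : ∀ ⦃S S'⦄, S ⊆ S' → D S' → D S)
    (Desc : ∀ B, D B → ¬ D Bᶜ ∧ 4 ≤ Bᶜ.card) :
    ∀ (N : ℕ) (q : Finset (Fin k) → ℕ),
      (Finset.univ.filter (fun S => q S ≤ 1)).card ≤ N →
      IsLOPoly k q → LONoSmallTwoSet q → (∀ S, D S → q S ≤ 1) →
      ∃ h, Relation.ReflTransGen LORecolourStep q h ∧ IsLOPoly k h ∧ LOSaturated h ∧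
        LONoSmallTwoSet h ∧ ∀ S, D S → h S ≤ 1 := by
  intro N
  induction N with
  | zero =>
    intro q hcard hq hns hD
    exfalso
    have h0 : q ∅ ≤ 1 := by
      have hb := hq.1 (∅ : Finset (Fin k))
      rcases Nat.lt_or_ge (q ∅) 2 with h | h
      · omega
      · have := hns ∅ (by omega); simp at this
    have : (∅ : Finset (Fin k)) ∈ Finset.univ.filter (fun S => q S ≤ 1) := by
      simp [h0]
    have := Finset.card_pos.2 ⟨_, this⟩
    omega
  | succ N ih =>
    intro q hcard hq hns hD
    by_cases hsat : LOSaturated q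
    · exact ⟨q, Relation.ReflTransGen.refl, hq, hsat, hns, hD⟩
    -- find a valid recolouring target B
    have hfind : ∃ B : Finset (Fin k), q B ≤ 1 ∧ B ≠ ∅ ∧ ¬ D B ∧ 4 ≤ B.card ∧
        (∀ A ⊆ Bᶜ, q A ≤ 1) := by
      by_cases hup : LOUpwardsClosed q
      · -- upwards closed, so complement condition fails
        have : ∃ X, q X ≤ 1 ∧ q Xᶜ ≤ 1 := by
          rw [LOSaturated] at hsat
          push_neg at hsat
          obtain ⟨X, hX1, hX2⟩ := hsat hup
          have hb := hq.1 Xᶜ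
          exact ⟨X, hX1, by omega⟩
        obtain ⟨X, hX, hXc⟩ := this
        have hsubX : ∀ A ⊆ X, q A ≤ 1 := fun A hA => bool_subset hq hup hX hA
        have hsubXc : ∀ A ⊆ Xᶜ, q A ≤ 1 := fun A hA => bool_subset hq hup hXc hA
        by_cases hDX : D X
        · refine ⟨Xᶜ, hXc, ?_, (Desc X hDX).1, (Desc X hDX).2, ?_⟩
          · intro h
            have := (Desc X hDX).2
            rw [h] at this; simp at this
          · intro A hA; rw [compl_compl] at hA; exact hsubX A hA
        by_cases hDXc : D Xᶜ
        · have h4 : 4 ≤ X.card := by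
            have := (Desc Xᶜ hDXc).2
            rwa [compl_compl] at this
          refine ⟨X, hX, ?_, hDX, h4, hsubXc⟩
          intro h; rw [h] at h4; simp at h4
        by_cases h4 : 4 ≤ X.card
        · refine ⟨X, hX, ?_, hDX, h4, hsubXc⟩
          intro h; rw [h] at h4; simp at h4
        · have h4c : 4 ≤ Xᶜ.card := by
            have h1 : Xᶜ.card = k - X.card := by
              rw [Finset.card_compl, Fintype.card_fin]
            have h2 : X.card ≤ k := by
              have := Finset.card_le_card (Finset.subset_univ X)
              simpa using this
            omega
          refine ⟨Xᶜ, hXc, ?_, hDXc, h4c, ?_⟩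
          · intro h; rw [h] at h4c; simp at h4c
          · intro A hA; rw [compl_compl] at hA; exact hsubX A hA
      · -- not upwards closed
        rw [LOUpwardsClosed] at hup
        push_neg at hup
        obtain ⟨W, B, hW2, hWB, hB⟩ := hup
        have hBbool : q B ≤ 1 := by have := hq.1 B; omega
        have hW4 : 4 ≤ W.card := hns W hW2
        refine ⟨B, hBbool, ?_, ?_, le_trans hW4 (Finset.card_le_card hWB), ?_⟩
        · intro h
          rw [h] at hWB
          have : W = ∅ := Finset.subset_empty.1 hWB
          rw [this] at hW4; simp at hW4
        · intro hDB
          have hW1 : q W ≤ 1 := hD W (Ddown hWB hDB)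
          rw [hW2] at hW1
          omega
        · intro A hA
          have hb := hq.1 A
          rcases Nat.lt_or_ge (q A) 2 with h | h
          · omega
          · exfalso
            refine no_disjoint_two (B := A) hq hW2 (by omega) ?_
            rw [Finset.disjoint_left]
            intro a haW haA
            have := hA haA
            simp only [Finset.mem_compl] at this
            exact this (hWB haW)
    obtain ⟨B, hBbool, hBne, hBD, hB4, hBsub⟩ := hfind
    set q' := LORecolour q B 2 with hq'def
    have hq' : IsLOPoly k q' := recolour_poly hq hBne hBsub
    have hstep : LORecolourStep q q' := ⟨hq', B, hBbool, rfl⟩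
    have hns' : LONoSmallTwoSet q' := by
      intro X hX2
      by_cases hXB : X = B
      · rw [hXB]; exact hB4
      · rw [hq'def, LORecolour_ne q 2 hXB] at hX2
        exact hns X hX2
    have hD' : ∀ S, D S → q' S ≤ 1 := by
      intro S hS
      by_cases hSB : S = B
      · exact absurd (hSB ▸ hS) hBD
      · rw [hq'def, LORecolour_ne q 2 hSB]; exact hD S hS
    have hcard' : (Finset.univ.filter (fun S => q' S ≤ 1)).card ≤ N := by
      have hmem : B ∈ Finset.univ.filter (fun S => q S ≤ 1) := by simp [hBbool]
      have hsubf : Finset.univ.filter (fun S => q' S ≤ 1) ⊆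
          (Finset.univ.filter (fun S => q S ≤ 1)).erase B := by
        intro S hS
        simp only [Finset.mem_filter, Finset.mem_univ, true_and] at hS
        rw [Finset.mem_erase]
        constructor
        · intro h
          rw [h, hq'def, LORecolour_same] at hS
          omega
        · have hSB : S ≠ B := by
            intro h; rw [h, hq'def, LORecolour_same] at hS; omega
          rw [hq'def, LORecolour_ne q 2 hSB] at hS
          simp [hS]
      have h1 := Finset.card_le_card hsubf
      have h2 := Finset.card_erase_of_mem hmem
      have h3 := Finset.card_pos.2 ⟨_, hmem⟩
      omega
    obtain ⟨h, hchain, hhp, hhs, hhns, hhD⟩ := ih q' hcard' hq' hns' hD'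
    exact ⟨h, Relation.ReflTransGen.head hstep hchain, hhp, hhs, hhns, hhD⟩

end LOAux3
section LOAux4

open Finset Relation

variable {n m k : ℕ}

lemma poly_of_chain {f g : Finset (Fin k) → ℕ}
    (h : Relation.ReflTransGen LORecolourStep f g) (hf : IsLOPoly k f) :
    IsLOPoly k g := by
  induction h with
  | refl => exact hf
  | tail _ hstep ih => exact hstep.1

lemma qT_poly {f₁ : Finset (Fin n) → ℕ} {π : Fin n → Fin m} {V : Finset (Fin n)}
    (hf₁ : IsLOPoly n f₁) (hf₂ : IsLOPoly n (LORecolour f₁ V 2)) (hVne : V ≠ ∅)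
    (T : Finset (Finset (Fin m))) (hT : ∀ S ∈ T, Pre π S = V) :
    IsLOPoly m (fun S => if S ∈ T then 2 else f₁ (Pre π S)) := by
  set f₂ := LORecolour f₁ V 2 with hf₂def
  have key : ∀ X Y Z : Finset (Fin m), Disjoint X Y → Disjoint X Z → Disjoint Y Z →
      X ∪ Y ∪ Z = Finset.univ → X ∈ T →
      HasUniqueMax (if X ∈ T then 2 else f₁ (Pre π X)) (if Y ∈ T then 2 else f₁ (Pre π Y))
        (if Z ∈ T then 2 else f₁ (Pre π Z)) := by
    intro X Y Z hXY hXZ hYZ hU hXT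
    have hPX : Pre π X = V := hT X hXT
    have hYT : Y ∉ T := by
      intro hYT
      have : Pre π Y = V := hT Y hYT
      have hd := Pre_disj (π := π) hXY
      rw [hPX, this] at hd
      exact hVne (by simpa using disjoint_self.1 hd)
    have hZT : Z ∉ T := by
      intro hZT
      have : Pre π Z = V := hT Z hZT
      have hd := Pre_disj (π := π) hXZ
      rw [hPX, this] at hd
      exact hVne (by simpa using disjoint_self.1 hd)
    have hPY : Pre π Y ≠ V := by
      intro h
      have hd := Pre_disj (π := π) hXY
      rw [hPX, h] at hd
      exact hVne (by simpa using disjoint_self.1 hd)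
    have hPZ : Pre π Z ≠ V := by
      intro h
      have hd := Pre_disj (π := π) hXZ
      rw [hPX, h] at hd
      exact hVne (by simpa using disjoint_self.1 hd)
    rw [if_pos hXT, if_neg hYT, if_neg hZT]
    have h2 := hf₂.2 (Pre π X) (Pre π Y) (Pre π Z) (Pre_disj hXY) (Pre_disj hXZ)
      (Pre_disj hYZ) (Pre_cover hU)
    rw [hf₂def] at h2
    rw [hPX, LORecolour_same, LORecolour_ne f₁ 2 hPY, LORecolour_ne f₁ 2 hPZ] at h2
    exact h2
  constructor
  · intro X
    dsimp only
    split
    · exact le_refl 2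
    · exact hf₁.1 _
  · intro X Y Z hXY hXZ hYZ hU
    dsimp only
    by_cases hXT : X ∈ T
    · exact key X Y Z hXY hXZ hYZ hU hXT
    by_cases hYT : Y ∈ T
    · have h := key Y X Z hXY.symm hYZ hXZ
        (by rw [← hU]; ext a; simp [Finset.mem_union]; tauto) hYT
      rw [HasUniqueMax] at h ⊢
      omega
    by_cases hZT : Z ∈ T
    · have h := key Z X Y hXZ.symm hYZ.symm hXY
        (by rw [← hU]; ext a; simp [Finset.mem_union]; tauto) hZT
      rw [HasUniqueMax] at h ⊢
      omega
    · rw [if_neg hXT, if_neg hYT, if_neg hZT]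
      exact hf₁.2 _ _ _ (Pre_disj hXY) (Pre_disj hXZ) (Pre_disj hYZ) (Pre_cover hU)

lemma minor_step {f₁ f₂ : Finset (Fin n) → ℕ} (π : Fin n → Fin m)
    (hf₁ : IsLOPoly n f₁) (hstep : LORecolourStep f₁ f₂) :
    Relation.ReflTransGen LORecolourStep (LOMinor f₁ π) (LOMinor f₂ π) := by
  obtain ⟨hf₂, V, hVb, rfl⟩ := hstep
  have hVne : V ≠ ∅ := by
    intro h
    subst h
    have hb := hf₂.1 Finset.univ
    have h2 := hf₂.2 ∅ ∅ Finset.univ (by simp) (by simp) (by simp) (by simp)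
    rw [LORecolour_same] at h2
    rcases h2 with ⟨h1, _⟩ | ⟨h1, _⟩ | ⟨h1, h2⟩ <;> omega
  have aux : ∀ T : Finset (Finset (Fin m)), (∀ S ∈ T, Pre π S = V) →
      Relation.ReflTransGen LORecolourStep (LOMinor f₁ π)
        (fun S => if S ∈ T then 2 else f₁ (Pre π S)) := by
    intro T
    induction T using Finset.induction_on with
    | empty =>
      intro _
      have : (fun S => if S ∈ (∅ : Finset (Finset (Fin m))) then 2 else f₁ (Pre π S)) =
          LOMinor f₁ π := by
        funext S; simp [LOMinor_eq]
      rw [this]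
    | @insert a T ha ih =>
      intro hT
      have hTsub : ∀ S ∈ T, Pre π S = V := fun S hS => hT S (Finset.mem_insert_of_mem hS)
      have hchain := ih hTsub
      have hPa : Pre π a = V := hT a (Finset.mem_insert_self a T)
      have hpoly := qT_poly hf₁ hf₂ hVne (insert a T) hT
      have hval : (if a ∈ T then 2 else f₁ (Pre π a)) ≤ 1 := by
        rw [if_neg ha, hPa]; exact hVb
      have heq : (fun S => if S ∈ insert a T then 2 else f₁ (Pre π S)) =
          LORecolour (fun S => if S ∈ T then 2 else f₁ (Pre π S)) a 2 := by
        funext S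
        by_cases hSa : S = a
        · subst hSa
          rw [LORecolour_same, if_pos (Finset.mem_insert_self S T)]
        · rw [LORecolour_ne _ 2 hSa]
          simp [Finset.mem_insert, hSa]
      refine Relation.ReflTransGen.tail hchain ⟨?_, a, hval, heq⟩
      rw [heq] at hpoly ⊢
      exact hpoly
  have hfin := aux (Finset.univ.filter (fun S => Pre π S = V)) (by intro S hS; simpa using hS)
  have : (fun S => if S ∈ Finset.univ.filter (fun S => Pre π S = V) then 2
      else f₁ (Pre π S)) = LOMinor (LORecolour f₁ V 2) π := by
    funext S
    rw [LOMinor_eq]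
    by_cases h : Pre π S = V
    · rw [if_pos (by simpa using h), h, LORecolour_same]
    · rw [if_neg (by simpa using h), LORecolour_ne f₁ 2 h]
  rwa [this] at hfin

lemma minor_chain {f g : Finset (Fin n) → ℕ} (π : Fin n → Fin m)
    (h : Relation.ReflTransGen LORecolourStep f g) (hf : IsLOPoly n f) :
    Relation.ReflTransGen LORecolourStep (LOMinor f π) (LOMinor g π) := by
  induction h with
  | refl => exact Relation.ReflTransGen.refl
  | tail hbc hstep ih =>
    exact ih.trans (minor_step π (poly_of_chain hbc hf) hstep)

lemma minor_saturated {g : Finset (Fin n) → ℕ} (π : Fin n → Fin m)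
    (hg : LOSaturated g) : LOSaturated (LOMinor g π) := by
  constructor
  · intro X Y hX hXY
    rw [LOMinor_eq] at hX ⊢
    exact hg.1 _ _ hX (Pre_mono hXY)
  · intro X hX
    rw [LOMinor_eq] at hX ⊢
    rw [Pre_compl]
    exact hg.2 _ hX

end LOAux4
section LOAux5

open Finset Relation

variable {n m k : ℕ}

lemma dict_eq {h : Finset (Fin k) → ℕ} (hp : IsLOPoly k h) {t : Fin k}
    (hproj : LORecolProj h t) {A B C : Finset (Fin k)}
    (hAB : Disjoint A B) (hAC : Disjoint A C) (hBC : Disjoint B C)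
    (hU : A ∪ B ∪ C = Finset.univ)
    (hA : h A ≤ 1) (hB : h B ≤ 1) (hC : h C ≤ 1) (hAne : A.Nonempty) :
    h A = if t ∈ A then 1 else 0 := by
  obtain ⟨a, ha⟩ := hAne
  have hBA : B ≠ A := fun e => (Finset.disjoint_left.1 hAB) ha (e ▸ ha)
  have hCA : C ≠ A := fun e => (Finset.disjoint_left.1 hAC) ha (e ▸ ha)
  exact hproj A hA (static_of_bool_partition hp hAB hAC hBC hU hA hB hC hBA hCA)

lemma cover_rot {α : Type*} [DecidableEq α] [Fintype α] {A B C : Finset α}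
    (h : A ∪ B ∪ C = Finset.univ) : C ∪ A ∪ B = Finset.univ := by
  apply Finset.eq_univ_of_forall
  intro a
  have := Finset.eq_univ_iff_forall.1 h a
  simp only [Finset.mem_union] at this ⊢
  tauto

lemma H_no_small (hn : 7 ≤ n) (hm : 7 ≤ m)
    (f : Finset (Fin n) → ℕ) (hf : IsLOPoly n f) (hns : LONoSmallTwoSet f)
    (g : Finset (Fin n) → ℕ) (hg : IsLOPureSaturation f g)
    (huniq : ∀ g2 : Finset (Fin n) → ℕ, IsLOPureSaturation f g2 → g2 = g)
    (π : Fin n → Fin m)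
    (hf' : IsLOPoly m (LOMinor f π)) (hns' : LONoSmallTwoSet (LOMinor f π))
    (g' : Finset (Fin m) → ℕ) (hg' : IsLOPureSaturation (LOMinor f π) g')
    (huniq' : ∀ g2 : Finset (Fin m) → ℕ, IsLOPureSaturation (LOMinor f π) g2 → g2 = g')
    (hnolarge : ¬ ∃ M : Finset (Fin m), LOMinTwoSet g' M ∧ m - 3 ≤ M.card) :
    LONoSmallTwoSet (LOMinor g π) := by
  intro X hX2
  by_contra hsmall
  rw [Nat.not_le] at hsmall
  obtain ⟨X', hXX', hX'3⟩ := Finset.exists_superset_card_eq (n := 3)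
    (show X.card ≤ 3 by omega) (by simp [Fintype.card_fin]; omega)
  have hgpoly : IsLOPoly n g := hg.1.1
  have hgsat : LOSaturated g := hg.1.2.1
  have hX'2 : g (Pre π X') = 2 := hgsat.1 _ _ hX2 (Pre_mono hXX')
  by_cases hbool : ∀ S, S ⊆ X'ᶜ → f (Pre π S) ≤ 1
  · -- m-side contradiction via hnolarge
    have Ddown : ∀ ⦃S S' : Finset (Fin m)⦄, S ⊆ S' → S' ⊂ X'ᶜ → S ⊂ X'ᶜ :=
      fun S S' hs hd => lt_of_le_of_lt hs hd
    have Desc : ∀ B : Finset (Fin m), B ⊂ X'ᶜ → ¬ Bᶜ ⊂ X'ᶜ ∧ 4 ≤ Bᶜ.card := by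
      intro B hB
      constructor
      · intro hBc
        have h1 : X' = ∅ := by
          rw [Finset.eq_empty_iff_forall_notMem]
          intro a haX
          by_cases haB : a ∈ B
          · exact Finset.mem_compl.1 (hB.subset haB) haX
          · exact Finset.mem_compl.1 (hBc.subset (Finset.mem_compl.2 haB)) haX
        rw [h1] at hX'3
        simp at hX'3
      · have hcard := Finset.card_lt_card hB
        have h2 : X'ᶜ.card = m - 3 := by rw [Finset.card_compl, hX'3, Fintype.card_fin]
        have h3 : Bᶜ.card = m - B.card := by rw [Finset.card_compl, Fintype.card_fin]
        omega
    obtain ⟨h', hchain, hp', hs', hns'', havoid⟩ := sat_avoid hm (fun S => S ⊂ X'ᶜ)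
      Ddown Desc (Finset.univ.filter (fun S => LOMinor f π S ≤ 1)).card (LOMinor f π)
      (le_refl _) hf' hns' (fun S hS => by rw [LOMinor_eq]; exact hbool S hS.subset)
    have hpure : IsLOPureSaturation (LOMinor f π) h' := ⟨⟨hp', hs', hchain⟩, hns''⟩
    have heq : h' = g' := huniq' h' hpure
    subst heq
    apply hnolarge
    refine ⟨X'ᶜ, ⟨?_, fun Y hY => ?_⟩, ?_⟩
    · -- h' X'ᶜ = 2
      have hX'b : h' X' ≤ 1 := by
        have hb := hp'.1 X'
        rcases Nat.lt_or_ge (h' X') 2 with h | h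
        · omega
        · have := hns'' X' (by omega); rw [hX'3] at this; omega
      exact hs'.2 X' hX'b
    · have := havoid Y hY; omega
    · rw [Finset.card_compl, hX'3, Fintype.card_fin]
  · -- n-side contradiction via huniq
    push_neg at hbool
    obtain ⟨S₀, hS₀sub, hS₀2⟩ := hbool
    have hW₀ : f (Pre π S₀) = 2 := by have := hf.1 (Pre π S₀); omega
    have hW₀4 : 4 ≤ (Pre π S₀).card := hns _ hW₀
    have hW₀sub : Pre π S₀ ⊆ (Pre π X')ᶜ := by
      rw [← Pre_compl]; exact Pre_mono hS₀sub
    have Ddown : ∀ ⦃S S' : Finset (Fin n)⦄, S ⊆ S' → S' ⊆ Pre π X' → S ⊆ Pre π X' :=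
      fun S S' hs hd => hs.trans hd
    have Desc : ∀ B : Finset (Fin n), B ⊆ Pre π X' → ¬ Bᶜ ⊆ Pre π X' ∧ 4 ≤ Bᶜ.card := by
      intro B hB
      constructor
      · intro hBc
        have h1 : Pre π S₀ = ∅ := by
          rw [Finset.eq_empty_iff_forall_notMem]
          intro a ha
          have haV : a ∉ Pre π X' := Finset.mem_compl.1 (hW₀sub ha)
          by_cases haB : a ∈ B
          · exact haV (hB haB)
          · exact haV (hBc (Finset.mem_compl.2 haB))
        rw [h1] at hW₀4; simp at hW₀4
      · refine le_trans hW₀4 (Finset.card_le_card ?_)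
        exact hW₀sub.trans (Finset.compl_subset_compl.2 hB)
    have hstart : ∀ S : Finset (Fin n), S ⊆ Pre π X' → f S ≤ 1 := by
      intro S hS
      have hb := hf.1 S
      rcases Nat.lt_or_ge (f S) 2 with h | h
      · omega
      · exfalso
        refine no_disjoint_two (A := S) (B := Pre π S₀) hf (by omega) hW₀ ?_
        rw [Finset.disjoint_left]
        intro a haS haS₀
        exact Finset.mem_compl.1 (hW₀sub haS₀) (hS haS)
    obtain ⟨h', hchain, hp', hs', hns'', havoid⟩ := sat_avoid hn (fun S => S ⊆ Pre π X')
      Ddown Desc (Finset.univ.filter (fun S => f S ≤ 1)).card f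
      (le_refl _) hf hns hstart
    have hpure : IsLOPureSaturation f h' := ⟨⟨hp', hs', hchain⟩, hns''⟩
    have heq : h' = g := huniq h' hpure
    subst heq
    have := havoid (Pre π X') (Finset.Subset.refl _)
    omega

end LOAux5
set_option maxHeartbeats 1000000 in
/-- Dictating variables are preserved by taking minors, under the stated conditions. -/
theorem stmt11 (n m : ℕ) (hn : 7 ≤ n) (hm : 7 ≤ m)
    (f : Finset (Fin n) → ℕ) (hf : IsLOPoly n f) (hns : LONoSmallTwoSet f)
    (g : Finset (Fin n) → ℕ) (hg : IsLOPureSaturation f g)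
    (huniq : ∀ g' : Finset (Fin n) → ℕ, IsLOPureSaturation f g' → g' = g)
    (π : Fin n → Fin m)
    (hf' : IsLOPoly m (LOMinor f π)) (hns' : LONoSmallTwoSet (LOMinor f π))
    (g' : Finset (Fin m) → ℕ) (hg' : IsLOPureSaturation (LOMinor f π) g')
    (huniq' : ∀ g'' : Finset (Fin m) → ℕ, IsLOPureSaturation (LOMinor f π) g'' → g'' = g')
    (hnolarge : ¬ ∃ M : Finset (Fin m), LOMinTwoSet g' M ∧ m - 3 ≤ M.card)
    (t : Fin n) (ht : LORecolProj g t) (t' : Fin m) (ht' : LORecolProj g' t') :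
    π t = t' := by
  have hgpoly : IsLOPoly n g := hg.1.1
  have hgsat : LOSaturated g := hg.1.2.1
  have hHns : LONoSmallTwoSet (LOMinor g π) :=
    H_no_small hn hm f hf hns g hg huniq π hf' hns' g' hg' huniq' hnolarge
  have hHpure : IsLOPureSaturation (LOMinor f π) (LOMinor g π) :=
    ⟨⟨minor_poly hgpoly π, minor_saturated π hgsat, minor_chain π hg.1.2.2 hf⟩, hHns⟩
  have heq : LOMinor g π = g' := huniq' _ hHpure
  subst heq
  set H := LOMinor g π with hHdef
  have hHpoly : IsLOPoly m H := minor_poly hgpoly π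
  have hHsat : LOSaturated H := minor_saturated π hgsat
  -- dictator transfer lemmas
  have hdictn : ∀ (A B C : Finset (Fin m)), Disjoint A B → Disjoint A C → Disjoint B C →
      A ∪ B ∪ C = Finset.univ → H A ≤ 1 → H B ≤ 1 → H C ≤ 1 → π t ∈ A → H A = 1 := by
    intro A B C hAB hAC hBC hU hA hB hC hxA
    have h1 : t ∈ Pre π A := mem_Pre.2 hxA
    have h2 := dict_eq hgpoly ht (Pre_disj hAB) (Pre_disj hAC) (Pre_disj hBC)
      (Pre_cover hU) hA hB hC ⟨t, h1⟩
    rw [if_pos h1] at h2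
    exact h2
  have hdictm : ∀ (A B C : Finset (Fin m)), Disjoint A B → Disjoint A C → Disjoint B C →
      A ∪ B ∪ C = Finset.univ → H A ≤ 1 → H B ≤ 1 → H C ≤ 1 → A.Nonempty →
      H A = if t' ∈ A then 1 else 0 := by
    intro A B C hAB hAC hBC hU hA hB hC hAne
    exact dict_eq hHpoly ht' hAB hAC hBC hU hA hB hC hAne
  -- minimal 2-set of H
  have hempty : H ∅ ≤ 1 := by
    have hb := hHpoly.1 ∅
    rcases Nat.lt_or_ge (H ∅) 2 with h | h
    · omega
    · have := hHns ∅ (by omega); simp at this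
  have huniv : H Finset.univ = 2 := by
    have := hHsat.2 ∅ hempty
    rwa [Finset.compl_empty] at this
  obtain ⟨M', _, hM'2, hM'min⟩ := exists_min_two huniv
  have h4 : 4 ≤ M'.card := hHns M' hM'2
  have hnl : M'.card < m - 3 := by
    by_contra hc
    exact hnolarge ⟨M', ⟨hM'2, hM'min⟩, by omega⟩
  have hMcard : M'.card ≤ m := by
    have := Finset.card_le_univ M'; simpa using this
  have hMc4 : 4 ≤ M'ᶜ.card := by
    rw [Finset.card_compl, Fintype.card_fin]; omega
  have hMc : H M'ᶜ ≤ 1 := two_compl hHpoly hM'2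
  have hsubMc : ∀ A ⊆ M'ᶜ, H A ≤ 1 := fun A hA => bool_subset hHpoly hHsat.1 hMc hA
  have hdiffbool : ∀ x ∈ M', H (M' \ {x}) ≤ 1 := by
    intro x hx
    have hss : M' \ {x} ⊂ M' :=
      Finset.sdiff_ssubset (Finset.singleton_subset_iff.2 hx) (Finset.singleton_nonempty x)
    have hb := hHpoly.1 (M' \ {x})
    have := hM'min _ hss
    omega
  have hsingle : ∀ x : Fin m, H {x} ≤ 1 := by
    intro x
    have hb := hHpoly.1 {x}
    rcases Nat.lt_or_ge (H {x}) 2 with h | h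
    · omega
    · have := hHns {x} (by omega); simp at this
  set x₀ := π t with hx₀def
  by_cases hx0 : x₀ ∈ M'
  · -- partition ({x₀}, M' \ {x₀}, M'ᶜ)
    have d1 : Disjoint ({x₀} : Finset (Fin m)) (M' \ {x₀}) := by
      rw [Finset.disjoint_left]; intro a ha hb
      rw [Finset.mem_singleton] at ha
      rw [Finset.mem_sdiff, Finset.mem_singleton] at hb
      exact hb.2 ha
    have d2 : Disjoint ({x₀} : Finset (Fin m)) M'ᶜ := by
      rw [Finset.disjoint_left]; intro a ha hb
      rw [Finset.mem_singleton] at ha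
      exact (Finset.mem_compl.1 hb) (ha ▸ hx0)
    have d3 : Disjoint (M' \ {x₀}) M'ᶜ :=
      disjoint_compl_right.mono_left Finset.sdiff_subset
    have hU : ({x₀} : Finset (Fin m)) ∪ (M' \ {x₀}) ∪ M'ᶜ = Finset.univ := by
      ext a
      simp only [Finset.mem_union, Finset.mem_singleton, Finset.mem_sdiff,
        Finset.mem_compl, Finset.mem_univ, iff_true]
      tauto
    have h1 : H {x₀} = 1 := hdictn {x₀} (M' \ {x₀}) M'ᶜ d1 d2 d3 hU (hsingle x₀)
      (hdiffbool x₀ hx0) hMc (Finset.mem_singleton_self x₀)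
    have h2 := hdictm {x₀} (M' \ {x₀}) M'ᶜ d1 d2 d3 hU (hsingle x₀)
      (hdiffbool x₀ hx0) hMc ⟨x₀, Finset.mem_singleton_self x₀⟩
    rw [h1] at h2
    by_cases ht'x : t' ∈ ({x₀} : Finset (Fin m))
    · exact (Finset.mem_singleton.1 ht'x).symm
    · rw [if_neg ht'x] at h2; omega
  · have hx0c : x₀ ∈ M'ᶜ := Finset.mem_compl.2 hx0
    obtain ⟨x₁, hx₁⟩ : M'.Nonempty := Finset.card_pos.1 (by omega)
    have hx₁x₀ : x₁ ≠ x₀ := fun e => hx0 (e ▸ hx₁)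
    -- partition (M'ᶜ, M' \ {x₁}, {x₁})
    have d1 : Disjoint M'ᶜ (M' \ {x₁}) :=
      disjoint_compl_left.mono_right Finset.sdiff_subset
    have d2 : Disjoint M'ᶜ ({x₁} : Finset (Fin m)) := by
      rw [Finset.disjoint_left]; intro a ha hb
      rw [Finset.mem_singleton] at hb
      exact (Finset.mem_compl.1 ha) (hb ▸ hx₁)
    have d3 : Disjoint (M' \ {x₁}) ({x₁} : Finset (Fin m)) := by
      rw [Finset.disjoint_left]; intro a ha hb
      rw [Finset.mem_singleton] at hb
      rw [Finset.mem_sdiff, Finset.mem_singleton] at ha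
      exact ha.2 hb
    have hU : M'ᶜ ∪ (M' \ {x₁}) ∪ ({x₁} : Finset (Fin m)) = Finset.univ := by
      ext a
      simp only [Finset.mem_union, Finset.mem_singleton, Finset.mem_sdiff,
        Finset.mem_compl, Finset.mem_univ, iff_true]
      tauto
    have hA1 : H M'ᶜ = 1 := hdictn M'ᶜ (M' \ {x₁}) {x₁} d1 d2 d3 hU hMc
      (hdiffbool x₁ hx₁) (hsingle x₁) hx0c
    have hA2 := hdictm M'ᶜ (M' \ {x₁}) {x₁} d1 d2 d3 hU hMc
      (hdiffbool x₁ hx₁) (hsingle x₁) ⟨x₀, hx0c⟩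
    have ht'M : t' ∈ M'ᶜ := by
      by_contra hcon
      rw [hA1, if_neg hcon] at hA2; omega
    by_cases ht'x : t' = x₀
    · exact ht'x.symm
    -- B₀ := insert x₀ (M' \ {x₁})
    set B₀ := insert x₀ (M' \ {x₁}) with hB₀def
    have hx₁B₀ : x₁ ∉ B₀ := by
      rw [hB₀def, Finset.mem_insert]
      push_neg
      refine ⟨hx₁x₀, ?_⟩
      rw [Finset.mem_sdiff, Finset.mem_singleton]
      push_neg
      intro _; rfl
    have hx₀B₀ : x₀ ∈ B₀ := Finset.mem_insert_self x₀ _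
    have ht'B₀ : t' ∉ B₀ := by
      rw [hB₀def, Finset.mem_insert]
      push_neg
      refine ⟨ht'x, ?_⟩
      rw [Finset.mem_sdiff]
      push_neg
      intro hmem
      exact absurd hmem (Finset.mem_compl.1 ht'M)
    by_cases hB0 : H B₀ ≤ 1
    · -- partition (B₀, {x₁}, M'ᶜ \ {x₀})
      have e1 : Disjoint B₀ ({x₁} : Finset (Fin m)) := by
        rw [Finset.disjoint_right]; intro a ha
        rw [Finset.mem_singleton] at ha
        rw [ha]; exact hx₁B₀
      have e2 : Disjoint B₀ (M'ᶜ \ {x₀}) := by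
        rw [Finset.disjoint_left]; intro a ha hb
        rw [Finset.mem_sdiff, Finset.mem_compl, Finset.mem_singleton] at hb
        rw [hB₀def, Finset.mem_insert, Finset.mem_sdiff] at ha
        rcases ha with h | h
        · exact hb.2 h
        · exact hb.1 h.1
      have e3 : Disjoint ({x₁} : Finset (Fin m)) (M'ᶜ \ {x₀}) := by
        rw [Finset.disjoint_left]; intro a ha hb
        rw [Finset.mem_singleton] at ha
        rw [Finset.mem_sdiff, Finset.mem_compl] at hb
        exact hb.1 (ha ▸ hx₁)
      have hU2 : B₀ ∪ ({x₁} : Finset (Fin m)) ∪ (M'ᶜ \ {x₀}) = Finset.univ := by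
        ext a
        simp only [hB₀def, Finset.mem_union, Finset.mem_insert, Finset.mem_singleton,
          Finset.mem_sdiff, Finset.mem_compl, Finset.mem_univ, iff_true]
        by_cases h1 : a ∈ M' <;> by_cases h2 : a = x₀ <;> by_cases h3 : a = x₁ <;> tauto
      have hMcx : H (M'ᶜ \ {x₀}) ≤ 1 := hsubMc _ Finset.sdiff_subset
      have hv1 : H B₀ = 1 := hdictn B₀ {x₁} (M'ᶜ \ {x₀}) e1 e2 e3 hU2 hB0
        (hsingle x₁) hMcx hx₀B₀
      have hv2 := hdictm (M'ᶜ \ {x₀}) B₀ {x₁} e2.symm e3.symm e1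
        (cover_rot hU2)
        hMcx hB0 (hsingle x₁) ⟨t', by rw [Finset.mem_sdiff, Finset.mem_singleton]; exact ⟨ht'M, ht'x⟩⟩
      rw [if_pos (by rw [Finset.mem_sdiff, Finset.mem_singleton]; exact ⟨ht'M, ht'x⟩)] at hv2
      have hum := hHpoly.2 B₀ {x₁} (M'ᶜ \ {x₀}) e1 e2 e3 hU2
      rw [hv1, hv2] at hum
      have hx₁b := hsingle x₁
      rcases hum with ⟨u1, u2⟩ | ⟨u1, u2⟩ | ⟨u1, u2⟩ <;> omega
    · have hB0' : H B₀ = 2 := by have := hHpoly.1 B₀; omega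
      have hB₀c : H B₀ᶜ ≤ 1 := two_compl hHpoly hB0'
      -- partition (B₀ᶜ, M' \ {x₁}, {x₀})
      have e1 : Disjoint B₀ᶜ (M' \ {x₁}) := by
        refine disjoint_compl_left.mono_right ?_
        rw [hB₀def]
        exact (Finset.subset_insert x₀ _)
      have e2 : Disjoint B₀ᶜ ({x₀} : Finset (Fin m)) := by
        rw [Finset.disjoint_right]; intro a ha
        rw [Finset.mem_singleton] at ha
        subst ha
        exact fun hc => Finset.mem_compl.1 hc hx₀B₀
      have e3 : Disjoint (M' \ {x₁}) ({x₀} : Finset (Fin m)) := by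
        rw [Finset.disjoint_right]; intro a ha
        rw [Finset.mem_singleton] at ha
        subst ha
        exact fun hc => hx0 (Finset.mem_sdiff.1 hc).1
      have hBu : (M' \ {x₁}) ∪ ({x₀} : Finset (Fin m)) = B₀ := by
        rw [hB₀def]
        ext a
        simp only [Finset.mem_union, Finset.mem_insert, Finset.mem_sdiff,
          Finset.mem_singleton]
        tauto
      have hU2 : B₀ᶜ ∪ (M' \ {x₁}) ∪ ({x₀} : Finset (Fin m)) = Finset.univ := by
        rw [Finset.union_assoc, hBu, Finset.union_comm, Finset.union_compl]
      have hv1 : H {x₀} = 1 := hdictn {x₀} B₀ᶜ (M' \ {x₁}) e2.symm e3.symm e1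
        (cover_rot hU2)
        (hsingle x₀) hB₀c (hdiffbool x₁ hx₁) (Finset.mem_singleton_self x₀)
      have hv2 := hdictm B₀ᶜ (M' \ {x₁}) {x₀} e1 e2 e3 hU2 hB₀c
        (hdiffbool x₁ hx₁) (hsingle x₀) ⟨t', Finset.mem_compl.2 ht'B₀⟩
      rw [if_pos (Finset.mem_compl.2 ht'B₀)] at hv2
      have hum := hHpoly.2 B₀ᶜ (M' \ {x₁}) {x₀} e1 e2 e3 hU2
      rw [hv1, hv2] at hum
      have hd := hdiffbool x₁ hx₁
      rcases hum with ⟨u1, u2⟩ | ⟨u1, u2⟩ | ⟨u1, u2⟩ <;> omega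
end

section
/- Let f be an n-ary polymorphism of (LO₂, LO₃) of arity n ≤ 6. Then either f has a small 2-set, or there is a unique t ∈ [n] such that f is a recoloured projection with dictating variable t. -/
open Finset

/-!
Without a 2-set of size at most 3, every set of size at most 3 is boolean, and since `n ≤ 6`
every set lies in a partition of `[n]` whose other two blocks are such small sets. So `f` is
0/1-valued on small sets, and every partition of `[n]` into three small sets has exactly one
1-set. Padding with dummy coordinates reduces to `n = 6`, where this forces `f ∅ = 0`,
additivity on pairs of disjoint sets whose union has three elements, and then, after locating a
singleton `{t}` of value 1, `f X = [t ∈ X]` for every small `X`. A partition of `[n]` into `S`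
and two small sets then gives `f S = [t ∈ S]` for every boolean set `S`, while `{t}` is static,
as recolouring it to 0 leaves a partition into three 0-sets; so `t` is the unique dictating
variable.
-/

def IsProjectionOnSmallSets {n : ℕ} (f : Finset (Fin n) → ℕ) (t : Fin n) : Prop :=
  ∀ X : Finset (Fin n), X.card ≤ 3 → f X = if t ∈ X then 1 else 0

lemma HasUniqueMax.add_add_eq_one {a b c : ℕ} (h : HasUniqueMax a b c) (ha : a ≤ 1)
    (hb : b ≤ 1) (hc : c ≤ 1) : a + b + c = 1 := by
  unfold HasUniqueMax at h
  omega

lemma exists_partition_card_le_three {n : ℕ} (hn : n ≤ 6) (S : Finset (Fin n)) :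
    ∃ Y Z : Finset (Fin n), Disjoint S Y ∧ Disjoint S Z ∧ Disjoint Y Z ∧ S ∪ Y ∪ Z = univ ∧
      Y.card ≤ 3 ∧ Z.card ≤ 3 := by
  have hSc : Sᶜ.card ≤ 6 := (card_le_univ _).trans (by simpa using hn)
  obtain ⟨Y, hYS, hY⟩ := exists_subset_card_eq (min_le_right 3 Sᶜ.card)
  refine ⟨Y, Sᶜ \ Y, disjoint_compl_right.mono_right hYS,
    disjoint_compl_right.mono_right sdiff_subset, disjoint_sdiff, ?_, by omega, ?_⟩
  · rw [union_assoc, union_sdiff_of_subset hYS, union_compl]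
  · rw [card_sdiff_of_subset hYS]
    omega

lemma LOMinor_image {n m : ℕ} (f : Finset (Fin n) → ℕ) {π : Fin n → Fin m}
    (hπ : Function.Injective π) (S : Finset (Fin n)) : LOMinor f π (S.image π) = f S := by
  unfold LOMinor
  congr 1
  ext a
  simp [hπ.mem_finset_image]

lemma LONoSmallTwoSet.minor {n m : ℕ} {f : Finset (Fin n) → ℕ} {π : Fin n → Fin m}
    (hf : LONoSmallTwoSet f) (hπ : Function.Injective π) : LONoSmallTwoSet (LOMinor f π) :=
  fun X hX => (hf _ hX).trans <|
    card_le_card_of_injOn π (fun a ha => by simpa using ha) hπ.injOn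

namespace IsLOPoly

lemma minor {n m : ℕ} {f : Finset (Fin n) → ℕ} (hf : IsLOPoly n f) (π : Fin n → Fin m) :
    IsLOPoly m (LOMinor f π) := by
  have hdisj : ∀ {U V : Finset (Fin m)}, Disjoint U V →
      Disjoint (univ.filter fun a => π a ∈ U) (univ.filter fun a => π a ∈ V) := by
    intro U V h
    simp only [disjoint_left, mem_filter, mem_univ, true_and] at h ⊢
    exact fun a => @h (π a)
  refine ⟨fun X => hf.1 _, fun X Y Z hXY hXZ hYZ hcov => hf.2 _ _ _ (hdisj hXY) (hdisj hXZ)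
    (hdisj hYZ) (eq_univ_of_forall fun a => ?_)⟩
  have ha : π a ∈ X ∪ Y ∪ Z := hcov ▸ mem_univ (π a)
  simpa only [mem_union, mem_filter, mem_univ, true_and] using ha

variable {n : ℕ} {f : Finset (Fin n) → ℕ}

lemma le_one_of_card_le_three (hf : IsLOPoly n f) (hns : LONoSmallTwoSet f)
    {X : Finset (Fin n)} (hX : X.card ≤ 3) : f X ≤ 1 := by
  by_contra h
  have := hns X (by have := hf.1 X; omega)
  omega

lemma add_add_eq_one (hf : IsLOPoly n f) (hns : LONoSmallTwoSet f) {X Y Z : Finset (Fin n)}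
    (hXY : Disjoint X Y) (hXZ : Disjoint X Z) (hYZ : Disjoint Y Z) (hcov : X ∪ Y ∪ Z = univ)
    (hX : X.card ≤ 3) (hY : Y.card ≤ 3) (hZ : Z.card ≤ 3) : f X + f Y + f Z = 1 :=
  (hf.2 X Y Z hXY hXZ hYZ hcov).add_add_eq_one (hf.le_one_of_card_le_three hns hX)
    (hf.le_one_of_card_le_three hns hY) (hf.le_one_of_card_le_three hns hZ)

section Six

variable {g : Finset (Fin 6) → ℕ}

lemma apply_add_apply_compl_add_apply_empty (hg : IsLOPoly 6 g) (hns : LONoSmallTwoSet g)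
    {X : Finset (Fin 6)} (hX : X.card = 3) : g X + g Xᶜ + g ∅ = 1 := by
  have h := hg.add_add_eq_one hns (disjoint_empty_right X) disjoint_compl_right
    (disjoint_empty_left _) (by simp) hX.le (by simp)
    (by rw [card_compl, Fintype.card_fin, hX])
  omega

lemma add_eq_apply_union_add_apply_empty (hg : IsLOPoly 6 g) (hns : LONoSmallTwoSet g)
    {A B : Finset (Fin 6)} (hAB : Disjoint A B) (hcard : (A ∪ B).card = 3) :
    g A + g B = g (A ∪ B) + g ∅ := by
  have hA : A.card ≤ 3 := hcard ▸ card_le_card subset_union_left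
  have hB : B.card ≤ 3 := hcard ▸ card_le_card subset_union_right
  have h := hg.add_add_eq_one hns hAB (disjoint_compl_right.mono_left subset_union_left)
    (disjoint_compl_right.mono_left subset_union_right) (union_compl _) hA hB
    (by rw [card_compl, Fintype.card_fin, hcard])
  have h' := hg.apply_add_apply_compl_add_apply_empty hns hcard
  omega

lemma apply_empty_eq_zero (hg : IsLOPoly 6 g) (hns : LONoSmallTwoSet g) : g ∅ = 0 := by
  by_contra h
  have hempty : g ∅ = 1 := by have := hg.le_one_of_card_le_three hns (X := ∅) (by simp); omega
  -- every 3-set is then a 0-set, so two disjoint sets covering a 3-set have values summing to 1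
  have hsplit : ∀ A B : Finset (Fin 6), Disjoint A B → (A ∪ B).card = 3 → g A + g B = 1 := by
    intro A B hAB hcard
    have := hg.add_eq_apply_union_add_apply_empty hns hAB hcard
    have := hg.apply_add_apply_compl_add_apply_empty hns hcard
    omega
  have h1 := hsplit {0} {2, 3} (by decide) (by decide)
  have h2 := hsplit {0} {4, 5} (by decide) (by decide)
  have h3 := hsplit {2} {0, 1} (by decide) (by decide)
  have h4 := hsplit {2} {4, 5} (by decide) (by decide)
  have h5 := hg.add_add_eq_one hns (X := {0, 1}) (Y := {2, 3}) (Z := {4, 5})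
    (by decide) (by decide) (by decide) (by decide) (by decide) (by decide) (by decide)
  omega

lemma apply_union (hg : IsLOPoly 6 g) (hns : LONoSmallTwoSet g) {A B : Finset (Fin 6)}
    (hAB : Disjoint A B) (hcard : (A ∪ B).card = 3) : g (A ∪ B) = g A + g B := by
  have := hg.add_eq_apply_union_add_apply_empty hns hAB hcard
  rw [hg.apply_empty_eq_zero hns] at this
  omega

lemma apply_add_apply_compl (hg : IsLOPoly 6 g) (hns : LONoSmallTwoSet g)
    {X : Finset (Fin 6)} (hX : X.card = 3) : g X + g Xᶜ = 1 := by
  have := hg.apply_add_apply_compl_add_apply_empty hns hX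
  rwa [hg.apply_empty_eq_zero hns, add_zero] at this

lemma apply_le_of_subset (hg : IsLOPoly 6 g) (hns : LONoSmallTwoSet g) {X C : Finset (Fin 6)}
    (hXC : X ⊆ C) (hC : C.card = 3) : g X ≤ g C := by
  have h := hg.apply_union hns disjoint_sdiff (by rwa [union_sdiff_of_subset hXC])
  rw [union_sdiff_of_subset hXC] at h
  omega

lemma exists_apply_singleton_eq_one (hg : IsLOPoly 6 g) (hns : LONoSmallTwoSet g) :
    ∃ t, g {t} = 1 := by
  by_contra! h
  have hsingle : ∀ a, g {a} = 0 := fun a => by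
    have := hg.le_one_of_card_le_three hns (X := {a}) (by simp)
    have := h a
    omega
  -- with all singletons 0-sets, `g {a, b} = g {a, b, c} = g {b, c}`
  have hslide : ∀ a b c : Fin 6, a ≠ b → a ≠ c → b ≠ c → g {a, b} = g {b, c} := by
    intro a b c hab hac hbc
    have hunion : ({a, b} ∪ {c} : Finset (Fin 6)) = {a} ∪ {b, c} := by
      ext
      simp only [mem_union, mem_insert, mem_singleton]
      tauto
    have hcard : ({a} ∪ {b, c} : Finset (Fin 6)).card = 3 := by
      rw [card_union_of_disjoint (by simp [hab, hac]), card_pair hbc, card_singleton]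
    have h1 := hg.apply_union hns (A := {a, b}) (B := {c}) (by simp [hac.symm, hbc.symm])
      (hunion ▸ hcard)
    have h2 := hg.apply_union hns (A := {a}) (B := {b, c}) (by simp [hab, hac]) hcard
    rw [hunion, hsingle] at h1
    rw [hsingle] at h2
    omega
  have h01 := hslide 0 1 2 (by decide) (by decide) (by decide)
  have h12 := hslide 1 2 3 (by decide) (by decide) (by decide)
  have h23 := hslide 2 3 4 (by decide) (by decide) (by decide)
  have h34 := hslide 3 4 5 (by decide) (by decide) (by decide)
  have hsum := hg.add_add_eq_one hns (X := {0, 1}) (Y := {2, 3}) (Z := {4, 5})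
    (by decide) (by decide) (by decide) (by decide) (by decide) (by decide) (by decide)
  omega

lemma apply_eq_one_of_card_eq_three (hg : IsLOPoly 6 g) (hns : LONoSmallTwoSet g) {t : Fin 6}
    (ht : g {t} = 1) {C : Finset (Fin 6)} (hC : C.card = 3) (htC : t ∈ C) : g C = 1 := by
  have := hg.apply_le_of_subset hns (singleton_subset_iff.2 htC) hC
  have := hg.le_one_of_card_le_three hns hC.le
  omega

lemma apply_eq_zero_of_notMem (hg : IsLOPoly 6 g) (hns : LONoSmallTwoSet g) {t : Fin 6}
    (ht : g {t} = 1) {X : Finset (Fin 6)} (hX : X.card ≤ 3) (htX : t ∉ X) : g X = 0 := by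
  obtain ⟨C, htC, hCX, hC⟩ := exists_subsuperset_card_eq (n := 3)
    (singleton_subset_iff.2 (mem_compl.2 htX)) (by simp)
    (by rw [card_compl, Fintype.card_fin]; omega)
  have hCc := hg.apply_add_apply_compl hns hC
  rw [hg.apply_eq_one_of_card_eq_three hns ht hC (singleton_subset_iff.1 htC)] at hCc
  have := hg.apply_le_of_subset hns (subset_compl_comm.1 hCX)
    (by rw [card_compl, Fintype.card_fin, hC])
  omega

lemma apply_eq_one_of_mem (hg : IsLOPoly 6 g) (hns : LONoSmallTwoSet g) {t : Fin 6}
    (ht : g {t} = 1) {X : Finset (Fin 6)} (hX : X.card ≤ 3) (htX : t ∈ X) : g X = 1 := by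
  obtain ⟨C, hXC, -, hC⟩ := exists_subsuperset_card_eq (n := 3) (subset_univ X) hX (by simp)
  have h := hg.apply_union hns disjoint_sdiff (by rwa [union_sdiff_of_subset hXC])
  rw [union_sdiff_of_subset hXC, hg.apply_eq_one_of_card_eq_three hns ht hC (hXC htX),
    hg.apply_eq_zero_of_notMem hns ht ((card_le_card sdiff_subset).trans hC.le)
      (fun h => (mem_sdiff.1 h).2 htX)] at h
  omega

lemma exists_isProjectionOnSmallSets_fin_six (hg : IsLOPoly 6 g) (hns : LONoSmallTwoSet g) :
    ∃ t, IsProjectionOnSmallSets g t := by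
  obtain ⟨t, ht⟩ := hg.exists_apply_singleton_eq_one hns
  refine ⟨t, fun X hX => ?_⟩
  split_ifs with htX
  · exact hg.apply_eq_one_of_mem hns ht hX htX
  · exact hg.apply_eq_zero_of_notMem hns ht hX htX

end Six

lemma exists_isProjectionOnSmallSets (hf : IsLOPoly n f) (hn : n ≤ 6)
    (hns : LONoSmallTwoSet f) : ∃ t, IsProjectionOnSmallSets f t := by
  have hσ : Function.Injective (Fin.castLE hn) := Fin.castLE_injective hn
  obtain ⟨t', ht'⟩ := (hf.minor (Fin.castLE hn)).exists_isProjectionOnSmallSets_fin_six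
    (hns.minor hσ)
  have hf' : ∀ X : Finset (Fin n), X.card ≤ 3 →
      f X = if t' ∈ X.image (Fin.castLE hn) then 1 else 0 := fun X hX => by
    rw [← LOMinor_image f hσ, ht' _ (card_image_le.trans hX)]
  obtain ⟨t, rfl⟩ : ∃ t, Fin.castLE hn t = t' := by
    by_contra! h
    obtain ⟨Y, Z, hY₀, hZ₀, hYZ, hcov, hY, hZ⟩ := exists_partition_card_le_three hn ∅
    have := hf.add_add_eq_one hns hY₀ hZ₀ hYZ hcov (by simp) hY hZ
    simp [hf' ∅ (by simp), hf' _ hY, hf' _ hZ, h] at this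
  exact ⟨t, fun X hX => by simp only [hf' X hX, hσ.mem_finset_image]⟩

lemma apply_eq_ite_of_le_one (hf : IsLOPoly n f) (hn : n ≤ 6) {t : Fin n}
    (ht : IsProjectionOnSmallSets f t) {S : Finset (Fin n)} (hS : f S ≤ 1) :
    f S = if t ∈ S then 1 else 0 := by
  obtain ⟨Y, Z, hSY, hSZ, hYZ, hcov, hY, hZ⟩ := exists_partition_card_le_three hn S
  have h := hf.2 S Y Z hSY hSZ hYZ hcov
  have htSYZ : t ∈ S ∪ Y ∪ Z := hcov ▸ mem_univ t
  rw [ht Y hY, ht Z hZ] at h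
  unfold HasUniqueMax at h
  simp only [mem_union] at htSYZ
  have htSY : t ∈ S → t ∉ Y := fun h => disjoint_left.1 hSY h
  have htSZ : t ∈ S → t ∉ Z := fun h => disjoint_left.1 hSZ h
  have htYZ : t ∈ Y → t ∉ Z := fun h => disjoint_left.1 hYZ h
  split_ifs at h ⊢ <;> first | omega | tauto

end IsLOPoly

lemma IsProjectionOnSmallSets.loStatic_singleton {n : ℕ} {f : Finset (Fin n) → ℕ} {t : Fin n}
    (ht : IsProjectionOnSmallSets f t) (hn : n ≤ 6) : LOStatic f {t} := by
  refine Or.inr ⟨by simpa using ht {t} (by simp), fun ⟨_, hrec⟩ => ?_⟩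
  obtain ⟨Y, Z, hSY, hSZ, hYZ, hcov, hY, hZ⟩ := exists_partition_card_le_three hn {t}
  have htY : t ∉ Y := disjoint_left.1 hSY (mem_singleton_self t)
  have htZ : t ∉ Z := disjoint_left.1 hSZ (mem_singleton_self t)
  have h := hrec.2 {t} Y Z hSY hSZ hYZ hcov
  simp [LORecolour, ht Y hY, ht Z hZ, htY, htZ, HasUniqueMax] at h

theorem stmt12_general (n : ℕ) (hn : n ≤ 6) (f : Finset (Fin n) → ℕ)
    (hf : IsLOPoly n f) :
    (∃ X : Finset (Fin n), f X = 2 ∧ X.card ≤ 3) ∨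
    (∃! t : Fin n, LORecolProj f t) := by
  by_cases hsmall : ∃ X : Finset (Fin n), f X = 2 ∧ X.card ≤ 3
  · exact Or.inl hsmall
  have hns : LONoSmallTwoSet f := fun X hX => by
    by_contra h
    exact hsmall ⟨X, hX, by omega⟩
  obtain ⟨t, ht⟩ := hf.exists_isProjectionOnSmallSets hn hns
  have hft : f {t} = 1 := by simpa using ht {t} (by simp)
  refine Or.inr ⟨t, fun S hS _ => hf.apply_eq_ite_of_le_one hn ht hS, fun t' ht' => ?_⟩
  have h := ht' {t} hft.le (ht.loStatic_singleton hn)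
  simpa [hft] using h

/-- A polymorphism of arity at most 6 either has a small 2-set or is a recoloured
projection with a unique dictating variable. -/
theorem stmt12 (n : ℕ) (hn1 : 1 ≤ n) (hn : n ≤ 6) (f : Finset (Fin n) → ℕ)
    (hf : IsLOPoly n f) :
    (∃ X : Finset (Fin n), f X = 2 ∧ X.card ≤ 3) ∨
    (∃! t : Fin n, LORecolProj f t) :=
  stmt12_general n hn f hf
end

section
/- Let f be an n-ary polymorphism of (LO₂, LO₃), let T be a 2-set of f, let A be a 1-set of f such that S = T \ A is a boolean set of f, and let a ∈ [n] with a ∉ T ∪ A. If S ∪ {a} is a boolean set of f, then f(A ∪ {a}) ≥ 1. -/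
open Finset

/-- Monotonicity: if `T` is a 2-set, `A` a 1-set with `S = T \ A` boolean, and
`a ∉ T ∪ A` is such that `S ∪ {a}` is boolean, then `f (A ∪ {a}) ≥ 1`. -/
theorem stmt14 (n : ℕ) (hn : 1 ≤ n) (f : Finset (Fin n) → ℕ) (hf : IsLOPoly n f)
    (T A : Finset (Fin n)) (hT : f T = 2) (hA : f A = 1) (hS : f (T \ A) ≤ 1)
    (a : Fin n) (ha : a ∉ T ∪ A) (hSa : f (insert a (T \ A)) ≤ 1) :
    1 ≤ f (insert a A) := by
  simp only [Finset.mem_union] at ha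
  push_neg at ha
  obtain ⟨haT, haA⟩ := ha
  by_contra hcon
  push_neg at hcon
  have h0 : f (insert a A) = 0 := Nat.lt_one_iff.mp hcon
  have part : ∀ X Y : Finset (Fin n), Disjoint X Y →
      HasUniqueMax (f X) (f Y) (f (X ∪ Y)ᶜ) := by
    intro X Y hXY
    exact hf.2 X Y (X ∪ Y)ᶜ hXY
      (disjoint_compl_right.mono_left subset_union_left)
      (disjoint_compl_right.mono_left subset_union_right) (Finset.union_compl _)
  have e1 : T ∪ insert a (A \ T) = insert a (T ∪ A) := by
    ext x; simp; try tauto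
  have e2 : A ∪ insert a (T \ A) = insert a (T ∪ A) := by
    ext x; simp; try tauto
  have e3 : insert a A ∪ (T \ A) = insert a (T ∪ A) := by
    ext x; simp; try tauto
  have e4 : (T \ A) ∪ A = T ∪ A := by
    ext x; simp; try tauto
  have e5 : T ∪ (A \ T) = T ∪ A := by
    ext x; simp; try tauto
  have hP3 := part T (insert a (A \ T)) (Finset.disjoint_left.mpr (fun x hx => by
    simp; exact ⟨fun h => haT (h ▸ hx), fun _ => hx⟩))
  have hP4 := part A (insert a (T \ A)) (Finset.disjoint_left.mpr (fun x hx => by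
    simp; exact ⟨fun h => haA (h ▸ hx), fun _ => hx⟩))
  have hP1 := part (insert a A) (T \ A) (Finset.disjoint_left.mpr (fun x hx => by
    simp at hx ⊢
    rcases hx with rfl | hx
    · exact fun h => absurd h haT
    · exact fun _ => hx))
  have hP6 := part (T \ A) A Finset.sdiff_disjoint
  have hP7 := part T (A \ T) (Finset.disjoint_sdiff)
  rw [e1] at hP3
  rw [e2] at hP4
  rw [e3] at hP1
  rw [e4] at hP6
  rw [e5] at hP7
  have b1 := hf.1 ((insert a (T ∪ A))ᶜ)
  have b2 := hf.1 ((T ∪ A)ᶜ)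
  have b3 := hf.1 (insert a (A \ T))
  have b4 := hf.1 (A \ T)
  unfold HasUniqueMax at hP3 hP4 hP1 hP6 hP7
  omega
end

section
/- Let f be an n-ary polymorphism of (LO₂, LO₃) and let T be a 2-set of f that can be written as the disjoint union of two boolean sets. Then every decomposition of T as a disjoint union T = A ∪ B of two boolean sets A, B of f satisfies exactly one of: (type 01) {f(A), f(B)} = {0,1}, or (type 00) f(A) = f(B) = 0; moreover, the type is the same for all such decompositions of T (i.e. T cannot admit one decomposition of type 01 and another of type 00). -/
open Finset

lemma pair_eq_zero_one_iff {a b : ℕ} (ha : a ≤ 1) (hb : b ≤ 1) :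
    ({a, b} : Set ℕ) = {0, 1} ↔ a + b = 1 := by
  constructor
  · intro h
    have h0 : (0 : ℕ) ∈ ({a, b} : Set ℕ) := h ▸ Set.mem_insert 0 {1}
    have h1 : (1 : ℕ) ∈ ({a, b} : Set ℕ) := h ▸ Set.mem_insert_of_mem 0 rfl
    simp only [Set.mem_insert_iff, Set.mem_singleton_iff] at h0 h1
    omega
  · intro h
    obtain ⟨rfl, rfl⟩ | ⟨rfl, rfl⟩ : (a = 0 ∧ b = 1) ∨ (a = 1 ∧ b = 0) := by omega
    · rfl
    · exact Set.pair_comm 1 0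

namespace IsLOPoly

variable {n : ℕ} {f : Finset (Fin n) → ℕ}

lemma apply_compl_le_one (hf : IsLOPoly n f) {T : Finset (Fin n)} (hT : f T = 2) :
    f Tᶜ ≤ 1 := by
  have hmax := hf.2 T Tᶜ ∅ disjoint_compl_right (disjoint_empty_right T)
    (disjoint_empty_right Tᶜ) (by simp)
  have hTc := hf.1 Tᶜ
  have hempty := hf.1 ∅
  unfold HasUniqueMax at hmax
  omega

lemma add_add_apply_compl_eq_one (hf : IsLOPoly n f) {T A B : Finset (Fin n)} (hT : f T = 2)
    (hAB : Disjoint A B) (hU : A ∪ B = T) (hA : f A ≤ 1) (hB : f B ≤ 1) :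
    f A + f B + f Tᶜ = 1 := by
  subst hU
  have hmax := hf.2 A B (A ∪ B)ᶜ hAB (disjoint_compl_right.mono_left subset_union_left)
    (disjoint_compl_right.mono_left subset_union_right) (union_compl _)
  exact hmax.add_add_eq_one hA hB (hf.apply_compl_le_one hT)

end IsLOPoly

theorem stmt16_general (n : ℕ) (f : Finset (Fin n) → ℕ) (hf : IsLOPoly n f)
    (T : Finset (Fin n)) (hT : f T = 2) :
    (∀ A B : Finset (Fin n), Disjoint A B → A ∪ B = T → f A ≤ 1 → f B ≤ 1 →
      Xor' (({f A, f B} : Set ℕ) = {0, 1}) (f A = 0 ∧ f B = 0)) ∧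
    (∀ A B A' B' : Finset (Fin n),
      Disjoint A B → A ∪ B = T → f A ≤ 1 → f B ≤ 1 →
      Disjoint A' B' → A' ∪ B' = T → f A' ≤ 1 → f B' ≤ 1 →
      ((({f A, f B} : Set ℕ) = {0, 1}) ↔ (({f A', f B'} : Set ℕ) = {0, 1}))) := by
  refine ⟨fun A B hAB hU hA hB => ?_, fun A B A' B' hAB hU hA hB hAB' hU' hA' hB' => ?_⟩
  · have hsum := hf.add_add_apply_compl_eq_one hT hAB hU hA hB
    rw [pair_eq_zero_one_iff hA hB, Xor', xor_iff_iff_not]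
    omega
  · have hsum := hf.add_add_apply_compl_eq_one hT hAB hU hA hB
    have hsum' := hf.add_add_apply_compl_eq_one hT hAB' hU' hA' hB'
    rw [pair_eq_zero_one_iff hA hB, pair_eq_zero_one_iff hA' hB']
    omega

/-- A 2-set that is a disjoint union of two boolean sets has a well-defined type:
every such decomposition is of type 01 (`{f A, f B} = {0,1}`) or of type 00
(`f A = f B = 0`), exactly one of the two holds, and the type does not depend on the
decomposition. -/
theorem stmt16 (n : ℕ) (hn : 1 ≤ n) (f : Finset (Fin n) → ℕ) (hf : IsLOPoly n f)
    (T : Finset (Fin n)) (hT : f T = 2)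
    (hdecomp : ∃ A B : Finset (Fin n), Disjoint A B ∧ A ∪ B = T ∧ f A ≤ 1 ∧ f B ≤ 1) :
    (∀ A B : Finset (Fin n), Disjoint A B → A ∪ B = T → f A ≤ 1 → f B ≤ 1 →
      Xor' (({f A, f B} : Set ℕ) = {0, 1}) (f A = 0 ∧ f B = 0)) ∧
    (∀ A B A' B' : Finset (Fin n),
      Disjoint A B → A ∪ B = T → f A ≤ 1 → f B ≤ 1 →
      Disjoint A' B' → A' ∪ B' = T → f A' ≤ 1 → f B' ≤ 1 →
      ((({f A, f B} : Set ℕ) = {0, 1}) ↔ (({f A', f B'} : Set ℕ) = {0, 1}))) :=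
  stmt16_general n f hf T hT
end
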